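/- arXiv:1201.3704 — 10 statements merged into one kernel-verified Lean document; each statement's English description precedes it below -/
import Mathlib

section
/- Assume the Popov matrix Π = [[Q, S],[Sᵀ, R]] is positive semidefinite. If X is a symmetric positive semidefinite solution of GDARE(Σ), then ker R_X ⊆ ker S_X (equivalently S_X G_X = 0); that is, X is a solution of CGDARE(Σ). -/
/-!
Adding the congruent copy `[A B]ᵀ X [A B]` of `X ≥ 0` to the Popov matrix `Π ≥ 0` gives the positive
semidefinite matrix `[[Q + AᵀXA, S_X], [S_Xᵀ, R_X]]`. In a positive semidefinite block matrix the
kernel of a diagonal block is annihilated by the off-diagonal block of its column, so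
`ker R_X ⊆ ker S_X`; applied to the columns of `G_X`, which lie in `ker R_X` because
`R_X R_X† R_X = R_X`, this gives `S_X G_X = 0`.
-/

open Matrix
open scoped ComplexOrder

namespace Matrix

variable {𝕜 : Type*} [RCLike 𝕜] {l m p : Type*} [Fintype l] [Fintype m] [Fintype p]

theorem PosSemidef.fromBlocks₁₂_mulVec_eq_zero {A : Matrix l l 𝕜} {B : Matrix l m 𝕜}
    {C : Matrix m l 𝕜} {D : Matrix m m 𝕜} (h : (fromBlocks A B C D).PosSemidef) {v : m → 𝕜}
    (hv : star v ⬝ᵥ D *ᵥ v = 0) : B *ᵥ v = 0 := by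
  have hw : fromBlocks A B C D *ᵥ Sum.elim 0 v = 0 := by
    rw [← h.dotProduct_mulVec_zero_iff, fromBlocks_mulVec]
    simpa [Function.star_sumElim, sumElim_dotProduct_sumElim] using hv
  ext i
  simpa [fromBlocks_mulVec] using congrFun hw (Sum.inl i)

theorem PosSemidef.fromBlocks_add_conjTranspose_mul_mul {Q : Matrix l l 𝕜} {S : Matrix l m 𝕜}
    {C : Matrix m l 𝕜} {R : Matrix m m 𝕜} (hP : (fromBlocks Q S C R).PosSemidef)
    {X : Matrix p p 𝕜} (hX : X.PosSemidef) (A : Matrix p l 𝕜) (B : Matrix p m 𝕜) :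
    (fromBlocks (Q + Aᴴ * X * A) (S + Aᴴ * X * B) (C + Bᴴ * X * A) (R + Bᴴ * X * B)).PosSemidef := by
  have hXAB := hX.conjTranspose_mul_mul_same (fromCols A B)
  rw [conjTranspose_fromCols_eq_fromRows_conjTranspose, fromRows_mul, fromRows_mul_fromCols]
    at hXAB
  rw [← fromBlocks_add]
  exact hP.add hXAB

theorem mul_eq_zero_of_mulVec_eq_zero_imp {α : Type*} [NonUnitalNonAssocSemiring α]
    {n k r : Type*} {M : Matrix r m α} {N : Matrix n m α} {G : Matrix m k α}
    (hker : ∀ v, M *ᵥ v = 0 → N *ᵥ v = 0) (hMG : M * G = 0) : N * G = 0 := by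
  ext i j
  have hcol : M *ᵥ Gᵀ j = 0 := funext fun i' => (mul_apply' ..).symm.trans (congrFun₂ hMG i' j)
  exact (mul_apply' ..).trans (congrFun (hker _ hcol) i)

end Matrix

theorem stmt_3_general (n m : ℕ)
    (A : Matrix (Fin n) (Fin n) ℝ) (B : Matrix (Fin n) (Fin m) ℝ)
    (Q : Matrix (Fin n) (Fin n) ℝ) (S : Matrix (Fin n) (Fin m) ℝ)
    (R : Matrix (Fin m) (Fin m) ℝ)
    (hPi : (Matrix.fromBlocks Q S Sᵀ R).PosSemidef)
    (X : Matrix (Fin n) (Fin n) ℝ) (hXpsd : X.PosSemidef)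
    (RXd : Matrix (Fin m) (Fin m) ℝ)
    (pen1 : (R + Bᵀ * X * B) * RXd * (R + Bᵀ * X * B) = R + Bᵀ * X * B) :
    (∀ v : Fin m → ℝ, (R + Bᵀ * X * B).mulVec v = 0 → (Aᵀ * X * B + S).mulVec v = 0)
    ∧ (Aᵀ * X * B + S) * (1 - RXd * (R + Bᵀ * X * B)) = 0 := by
  have hPiX := PosSemidef.fromBlocks_add_conjTranspose_mul_mul hPi hXpsd A B
  simp only [conjTranspose_eq_transpose_of_trivial] at hPiX
  have hker (v : Fin m → ℝ) (hv : (R + Bᵀ * X * B) *ᵥ v = 0) : (Aᵀ * X * B + S) *ᵥ v = 0 := by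
    rw [add_comm]
    exact PosSemidef.fromBlocks₁₂_mulVec_eq_zero hPiX (by rw [hv, dotProduct_zero])
  refine ⟨hker, mul_eq_zero_of_mulVec_eq_zero_imp hker ?_⟩
  rw [Matrix.mul_sub, Matrix.mul_one, ← Matrix.mul_assoc, pen1, sub_self]

theorem stmt_3 (n m : ℕ)
    (A : Matrix (Fin n) (Fin n) ℝ) (B : Matrix (Fin n) (Fin m) ℝ)
    (Q : Matrix (Fin n) (Fin n) ℝ) (S : Matrix (Fin n) (Fin m) ℝ)
    (R : Matrix (Fin m) (Fin m) ℝ)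
    (hQ : Qᵀ = Q) (hR : Rᵀ = R)
    (hPi : (Matrix.fromBlocks Q S Sᵀ R).PosSemidef)
    (X : Matrix (Fin n) (Fin n) ℝ) (hX : Xᵀ = X) (hXpsd : X.PosSemidef)
    (RXd : Matrix (Fin m) (Fin m) ℝ)
    (pen1 : (R + Bᵀ * X * B) * RXd * (R + Bᵀ * X * B) = R + Bᵀ * X * B)
    (pen2 : RXd * (R + Bᵀ * X * B) * RXd = RXd)
    (pen3 : ((R + Bᵀ * X * B) * RXd)ᵀ = (R + Bᵀ * X * B) * RXd)
    (pen4 : (RXd * (R + Bᵀ * X * B))ᵀ = RXd * (R + Bᵀ * X * B))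
    (hGDARE : X = Aᵀ * X * A - (Aᵀ * X * B + S) * RXd * (Aᵀ * X * B + S)ᵀ + Q) :
    (∀ v : Fin m → ℝ, (R + Bᵀ * X * B).mulVec v = 0 → (Aᵀ * X * B + S).mulVec v = 0)
    ∧ (Aᵀ * X * B + S) * (1 - RXd * (R + Bᵀ * X * B)) = 0 :=
  stmt_3_general n m A B Q S R hPi X hXpsd RXd pen1
end

section
/- Let A, Q, X ∈ ℝ^{n×n} with Q = Qᵀ positive semidefinite and X = Xᵀ a solution of the Stein equation X = AᵀXA + Q. Then ker X is A-invariant and ker X ⊆ ker Q; that is, for every x ∈ ℝⁿ with X x = 0 one has X (A x) = 0 and Q x = 0. -/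
open Matrix
open scoped ComplexOrder

/-!
Choose `μ` on the unit circle outside the spectrum of the complexified `A`. If
`X (μ - A) w = 0`, then `A w = μ w - v` with `X v = 0`, so `(A w)* X (A w) = w* X w` and the
Stein equation forces `w* Q w = 0`, i.e. `Q w = 0`. Then `X w = Aᴴ X A w = μ Aᴴ X w`, so `X w`
lies in the kernel of the invertible `(μ - A)ᴴ`, and `X w = 0`. Hence `(μ - A)⁻¹` maps `ker X`
into, and by dimension onto, itself, so `A = μ - (μ - A)` preserves `ker X`; finally
`Q x = X x - Aᵀ X A x = 0`.
-/

theorem Submodule.le_comap_of_comap_le {K V : Type*} [DivisionRing K] [AddCommGroup V]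
    [Module K V] [FiniteDimensional K V] {f : V →ₗ[K] V} (hf : Function.Injective f)
    {p : Submodule K V} (h : p.comap f ≤ p) : p ≤ p.comap f := by
  have hfinrank : Module.finrank K (p.comap f) = Module.finrank K p := by
    rw [show f = LinearEquiv.ofInjectiveEndo f hf from rfl, comap_equiv_eq_map_symm,
      LinearEquiv.finrank_map_eq]
  exact (eq_of_le_of_finrank_eq h hfinrank).ge

section ofReal

variable {m n : Type*}

theorem Matrix.conjTranspose_map_ofReal (M : Matrix m n ℝ) :
    (M.map ((↑) : ℝ → ℂ))ᴴ = Mᵀ.map (↑) := by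
  rw [← conjTranspose_map _ (fun _ => by simp), conjTranspose_eq_transpose_of_trivial]

theorem Matrix.map_ofReal_mulVec [Fintype n] (M : Matrix m n ℝ) (v : n → ℝ) :
    M.map ((↑) : ℝ → ℂ) *ᵥ ((↑) ∘ v) = (↑) ∘ (M *ᵥ v) :=
  funext fun i => (Complex.ofRealHom.map_mulVec M v i).symm

theorem Matrix.PosSemidef.map_ofReal [Fintype n] {Q : Matrix n n ℝ}
    (hQ : Q.PosSemidef) : (Q.map ((↑) : ℝ → ℂ)).PosSemidef := by
  classical
  open scoped MatrixOrder in
  obtain ⟨B, rfl⟩ := CStarAlgebra.nonneg_iff_eq_star_mul_self.mp hQ.nonneg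
  convert posSemidef_conjTranspose_mul_self (B.map ((↑) : ℝ → ℂ)) using 1
  rw [← conjTranspose_map _ (fun _ => by simp)]
  exact Matrix.map_mul (f := Complex.ofRealHom)

end ofReal

variable {ι 𝕜 : Type*} [Fintype ι] [DecidableEq ι] [RCLike 𝕜]

theorem Matrix.exists_norm_eq_one_notMem_spectrum (A : Matrix ι ι ℂ) :
    ∃ μ : ℂ, ‖μ‖ = 1 ∧ μ ∉ spectrum ℂ A := by
  have : Nontrivial Circle := ⟨1, -1, fun h => by norm_num [Circle.ext_iff] at h⟩
  have : Infinite Circle := PreconnectedSpace.infinite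
  obtain ⟨_, ⟨μ, rfl⟩, hμ⟩ := ((Set.infinite_range_of_injective (α := Circle)
    Circle.coe_injective).sdiff A.finite_spectrum).nonempty
  exact ⟨μ, μ.norm_coe, hμ⟩

theorem Matrix.mulVec_eq_zero_of_stein {A Q X : Matrix ι ι 𝕜} (hQ : Q.PosSemidef)
    (hX : X.IsHermitian) (hStein : X = Aᴴ * X * A + Q) {μ : 𝕜} (hμ : ‖μ‖ = 1)
    (hAμ : μ ∉ spectrum 𝕜 A) {w : ι → 𝕜} (hw : X *ᵥ ((μ • 1 - A) *ᵥ w) = 0) :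
    X *ᵥ w = 0 := by
  set v := (μ • 1 - A) *ᵥ w
  have hμμ : star μ * μ = 1 := by simp [RCLike.conj_mul, hμ]
  have hAw : A *ᵥ w = μ • w - v := by
    simp only [v, sub_mulVec, smul_mulVec, one_mulVec, sub_sub_cancel]
  have hXAw : X *ᵥ (A *ᵥ w) = μ • (X *ᵥ w) := by
    rw [hAw, mulVec_sub, mulVec_smul, hw, sub_zero]
  have hvX : star v ᵥ* X = 0 := by
    rw [← hX.eq, ← star_mulVec, hw, star_zero]
  have hXw : X *ᵥ w = Aᴴ *ᵥ (X *ᵥ (A *ᵥ w)) + Q *ᵥ w := by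
    conv_lhs => rw [hStein]
    rw [add_mulVec, mulVec_mulVec, mulVec_mulVec]
  have hQw : Q *ᵥ w = 0 := by
    refine (hQ.dotProduct_mulVec_zero_iff w).mp ?_
    have hform : star (A *ᵥ w) ⬝ᵥ X *ᵥ (A *ᵥ w) = star w ⬝ᵥ X *ᵥ w := by
      rw [hXAw, hAw, star_sub, sub_dotProduct]
      simp only [dotProduct_smul, dotProduct_mulVec (star v), hvX, zero_dotProduct, smul_zero,
        sub_zero, star_smul, smul_dotProduct, smul_smul, mul_comm μ, hμμ, one_smul]
    have := congrArg (star w ⬝ᵥ ·) hXw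
    simp only [dotProduct_add, dotProduct_mulVec (star w) Aᴴ, ← star_mulVec, hform] at this
    linear_combination -this
  have hstar : star (μ • 1 - A) *ᵥ (X *ᵥ w) = 0 := by
    rw [hQw, add_zero, hXAw, mulVec_smul] at hXw
    rw [star_sub, star_smul, star_one, sub_mulVec, smul_mulVec, one_mulVec, star_eq_conjTranspose]
    nth_rw 1 [hXw]
    rw [smul_smul, hμμ, one_smul, sub_self]
  have hunit : IsUnit (star (μ • 1 - A)) := by
    rw [spectrum.notMem_iff, Algebra.algebraMap_eq_smul_one] at hAμ
    exact hAμ.star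
  exact mulVec_injective_iff_isUnit.mpr hunit (hstar.trans (mulVec_zero _).symm)

theorem Matrix.mulVec_mulVec_eq_zero_of_stein {A Q X : Matrix ι ι ℂ} (hQ : Q.PosSemidef)
    (hX : X.IsHermitian) (hStein : X = Aᴴ * X * A + Q) {x : ι → ℂ} (hx : X *ᵥ x = 0) :
    X *ᵥ (A *ᵥ x) = 0 := by
  obtain ⟨μ, hμ, hAμ⟩ := A.exists_norm_eq_one_notMem_spectrum
  have hinj : Function.Injective (μ • 1 - A).mulVecLin := by
    rw [spectrum.notMem_iff, Algebra.algebraMap_eq_smul_one] at hAμ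
    exact mulVec_injective_iff_isUnit.mpr hAμ
  have hker :
      (LinearMap.ker X.mulVecLin).comap (μ • 1 - A).mulVecLin ≤ LinearMap.ker X.mulVecLin :=
    fun w hw => mulVec_eq_zero_of_stein hQ hX hStein hμ hAμ hw
  have hTx : X *ᵥ ((μ • 1 - A) *ᵥ x) = 0 := Submodule.le_comap_of_comap_le hinj hker hx
  rwa [sub_mulVec, mulVec_sub, smul_mulVec, one_mulVec, mulVec_smul, hx, smul_zero, zero_sub,
    neg_eq_zero] at hTx

theorem stmt_4 (n : ℕ)
    (A Q X : Matrix (Fin n) (Fin n) ℝ)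
    (hQ : Q.PosSemidef) (hX : Xᵀ = X)
    (hStein : X = Aᵀ * X * A + Q) :
    ∀ x : Fin n → ℝ, X.mulVec x = 0 →
      X.mulVec (A.mulVec x) = 0 ∧ Q.mulVec x = 0 := by
  intro x hx
  have hXc : (X.map ((↑) : ℝ → ℂ)).IsHermitian := by
    rw [IsHermitian, conjTranspose_map_ofReal, hX]
  have hSteinc : X.map ((↑) : ℝ → ℂ) =
      (A.map (↑))ᴴ * X.map (↑) * A.map (↑) + Q.map (↑) := by
    rw [conjTranspose_map_ofReal]
    have := congrArg Complex.ofRealHom.mapMatrix hStein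
    simp only [map_add, map_mul, RingHom.mapMatrix_apply] at this
    exact this
  have hXA : X *ᵥ (A *ᵥ x) = 0 := by
    have := mulVec_mulVec_eq_zero_of_stein hQ.map_ofReal hXc hSteinc
      (x := (↑) ∘ x) (by rw [map_ofReal_mulVec, hx]; rfl)
    rw [map_ofReal_mulVec, map_ofReal_mulVec] at this
    exact Complex.ofReal_injective.comp_left (this.trans (by ext; simp))
  refine ⟨hXA, ?_⟩
  rw [eq_sub_of_add_eq' hStein.symm, sub_mulVec, ← mulVec_mulVec, ← mulVec_mulVec, hx, hXA,
    mulVec_zero, sub_zero]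
end

section
/- Let A, F, X ∈ ℝ^{n×n} and B ∈ ℝ^{n×m} satisfy Aᵀ X F = X and Bᵀ X F = 0. Then Bᵀ (Aᵀ)^k X = 0 for all k ≥ 0; that is, the range of X is contained in the unobservable subspace of the pair (Aᵀ, Bᵀ). -/
/-!
From `X = Aᵀ (X F)` we get `rank X ≤ rank (X F)`, and the range of `X F` is contained in that
of `X`, so the two ranges coincide. Hence any `M` with `M X F = 0` already satisfies `M X = 0`.
Applying this to `M = Bᵀ (Aᵀ)^k` and using `Bᵀ (Aᵀ)^(k+1) X F = Bᵀ (Aᵀ)^k X` gives the claim by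
induction on `k`.
-/

open Matrix

namespace Matrix

variable {K : Type*} [Field K] {l m n : Type*} [Fintype m] [Fintype n]

theorem range_mulVecLin_mul_eq_of_mul_mul_eq {C : Matrix m m K} {X : Matrix m n K}
    {F : Matrix n n K} (h : C * X * F = X) :
    LinearMap.range (X * F).mulVecLin = LinearMap.range X.mulVecLin := by
  refine Submodule.eq_of_le_of_finrank_le ?_ ?_
  · rw [mulVecLin_mul]
    exact LinearMap.range_comp_le_range _ _
  · calc X.rank = (C * (X * F)).rank := by rw [← Matrix.mul_assoc, h]
      _ ≤ (X * F).rank := rank_mul_le_right _ _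

theorem mul_eq_zero_of_mul_mul_eq_zero {C : Matrix m m K} {X : Matrix m n K}
    {F : Matrix n n K} (h : C * X * F = X) {M : Matrix l m K} (hM : M * X * F = 0) :
    M * X = 0 := by
  classical
  suffices LinearMap.range X.mulVecLin ≤ LinearMap.ker M.mulVecLin by
    rwa [LinearMap.range_le_ker_iff, ← mulVecLin_mul, ← toLin'_apply', ← map_zero toLin',
      toLin'.injective.eq_iff] at this
  rw [← range_mulVecLin_mul_eq_of_mul_mul_eq h, LinearMap.range_le_ker_iff, ← mulVecLin_mul,
    ← Matrix.mul_assoc, hM, mulVecLin_zero]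

theorem mul_pow_mul_eq_zero [DecidableEq m] {C : Matrix m m K} {X : Matrix m n K}
    {F : Matrix n n K} (h : C * X * F = X) {M : Matrix l m K} (hM : M * X * F = 0) (k : ℕ) :
    M * C ^ k * X = 0 := by
  induction k with
  | zero => simpa using mul_eq_zero_of_mul_mul_eq_zero h hM
  | succ k ih =>
    refine mul_eq_zero_of_mul_mul_eq_zero h ?_
    calc M * C ^ (k + 1) * X * F = M * C ^ k * (C * X * F) := by
          simp only [pow_succ, Matrix.mul_assoc]
      _ = 0 := by rw [h, ih]

end Matrix

theorem stmt_6 (n m : ℕ)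
    (A F X : Matrix (Fin n) (Fin n) ℝ) (B : Matrix (Fin n) (Fin m) ℝ)
    (h1 : Aᵀ * X * F = X) (h2 : Bᵀ * X * F = 0) :
    ∀ k : ℕ, Bᵀ * (Aᵀ) ^ k * X = 0 :=
  mul_pow_mul_eq_zero h1 h2
end

section
/- Let C ∈ ℝ^{p×n} and D ∈ ℝ^{p×m} be such that Q = CᵀC, S = CᵀD and R = DᵀD. If X is a symmetric solution of GDARE(Σ), then ker X is an output-nulling subspace of the quadruple (A, B, C, D) and −K_X is a friend of ker X: for every x ∈ ℝⁿ with X x = 0 one has X ((A − B K_X) x) = 0 and (C − D K_X) x = 0. -/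
/-!
Completing the square with `K = R_X† S_Xᵀ` turns GDARE into the Stein equation
`X = Fᵀ X F + Gᵀ G` for the closed loop `F = A - B K`, `G = C - D K`; this uses
`R_X† R_X R_X† = R_X†` and the symmetry of `R_X†`, which follows from the Penrose equations.
It remains to see that for a symmetric, possibly indefinite, solution of a Stein equation
`ker X` is `F`-invariant and lies in `ker G`.

Let `q v = vᵀ X v` and let `ν` be its negative index. As `q (F v) = q v - ‖G v‖² ≤ q v`,
the map `F` is injective on a `ν`-dimensional `q`-negative definite subspace `N` and maps it onto
another one, `M`. If `x ∈ ker X` had `G x ≠ 0`, then `v ↦ q (F v)` would be negative definite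
on `N ⊕ ℝ x`, and the image of this space under `F` would be a `(ν + 1)`-dimensional
`q`-negative definite subspace. Once `G x = 0`, the vector `F x` is `q`-orthogonal to `M` and
`q (F x) = 0`. By maximality of `M`, `q ≥ 0` on its `q`-orthogonal complement, which together
with `M` spans the whole space, so the Cauchy–Schwarz argument for semidefinite forms gives
`X F x = 0`.
-/

open Module Matrix
open LinearMap (BilinForm)

namespace LinearMap.BilinForm

variable {E E' : Type*} [AddCommGroup E] [Module ℝ E] [AddCommGroup E'] [Module ℝ E']

def IsNegDefOn (b : BilinForm ℝ E) (W : Submodule ℝ E) : Prop :=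
  ∀ w ∈ W, w ≠ 0 → b w w < 0

lemma isNegDefOn_bot (b : BilinForm ℝ E) : b.IsNegDefOn ⊥ := fun _ hw hne =>
  absurd ((Submodule.mem_bot ℝ).1 hw) hne

lemma injOn_of_isNegDefOn_comp {b : BilinForm ℝ E} {f : E' →ₗ[ℝ] E} {W : Submodule ℝ E'}
    (hW : (b.comp f f).IsNegDefOn W) : Set.InjOn f W := by
  intro u hu v hv huv
  by_contra hne
  have := hW (u - v) (W.sub_mem hu hv) (sub_ne_zero.2 hne)
  simp [comp_apply, huv] at this

lemma isNegDefOn_map_of_comp {b : BilinForm ℝ E} {f : E' →ₗ[ℝ] E} {W : Submodule ℝ E'}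
    (hW : (b.comp f f).IsNegDefOn W) : b.IsNegDefOn (W.map f) := by
  rintro _ ⟨w, hw, rfl⟩ hne
  exact hW w hw (fun h => hne (by rw [h, map_zero]))

lemma finrank_map_eq_of_isNegDefOn_comp {b : BilinForm ℝ E} {f : E' →ₗ[ℝ] E}
    {W : Submodule ℝ E'} (hW : (b.comp f f).IsNegDefOn W) : finrank ℝ (W.map f) = finrank ℝ W := by
  rw [← LinearMap.range_domRestrict]
  refine LinearMap.finrank_range_of_inj fun u v huv => Subtype.ext ?_
  exact injOn_of_isNegDefOn_comp hW u.2 v.2 huv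

lemma apply_eq_zero_of_apply_self_eq_zero {b : BilinForm ℝ E} (hb : b.IsSymm) {y z : E}
    (hy : b y y = 0) (hnn : ∀ t : ℝ, 0 ≤ b (y + t • z) (y + t • z)) : b y z = 0 := by
  have hdiscrim := discrim_le_zero (a := b z z) (b := 2 * b y z) (c := 0) fun t => by
    have := hnn t
    simp only [map_add, map_smul, LinearMap.add_apply, LinearMap.smul_apply, smul_eq_mul, hy,
      hb.eq z y] at this
    linarith
  rw [discrim] at hdiscrim
  nlinarith [sq_nonneg (b y z)]

variable [FiniteDimensional ℝ E]

noncomputable def negIndex (b : BilinForm ℝ E) : ℕ :=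
  sSup {k | ∃ W : Submodule ℝ E, b.IsNegDefOn W ∧ finrank ℝ W = k}

lemma bddAbove_negIndex_set (b : BilinForm ℝ E) :
    BddAbove {k | ∃ W : Submodule ℝ E, b.IsNegDefOn W ∧ finrank ℝ W = k} :=
  ⟨finrank ℝ E, by rintro _ ⟨W, -, rfl⟩; exact Submodule.finrank_le W⟩

lemma finrank_le_negIndex {b : BilinForm ℝ E} {W : Submodule ℝ E} (hW : b.IsNegDefOn W) :
    finrank ℝ W ≤ b.negIndex :=
  le_csSup (bddAbove_negIndex_set b) ⟨W, hW, rfl⟩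

lemma exists_isNegDefOn_finrank_eq_negIndex (b : BilinForm ℝ E) :
    ∃ N : Submodule ℝ E, b.IsNegDefOn N ∧ finrank ℝ N = b.negIndex :=
  Nat.sSup_mem (s := {k | ∃ W : Submodule ℝ E, b.IsNegDefOn W ∧ finrank ℝ W = k})
    ⟨0, ⊥, isNegDefOn_bot b, finrank_bot ℝ E⟩ (bddAbove_negIndex_set b)

lemma negIndex_comp_le [FiniteDimensional ℝ E'] (b : BilinForm ℝ E) (f : E' →ₗ[ℝ] E) :
    (b.comp f f).negIndex ≤ b.negIndex := by
  obtain ⟨N, hN, hNfin⟩ := (b.comp f f).exists_isNegDefOn_finrank_eq_negIndex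
  rw [← hNfin, ← finrank_map_eq_of_isNegDefOn_comp hN]
  exact finrank_le_negIndex (isNegDefOn_map_of_comp hN)

lemma finrank_add_one_le_negIndex {b b' : BilinForm ℝ E} {N : Submodule ℝ E} {z : E}
    (hN : b.IsNegDefOn N) (hz : b' z z < 0)
    (hle : ∀ n ∈ N, ∀ t : ℝ, b' (n + t • z) (n + t • z) ≤ b n n) :
    finrank ℝ N + 1 ≤ b'.negIndex := by
  have hzN : z ∉ N := by
    intro hzN
    have hz0 : z ≠ 0 := by rintro rfl; simp at hz
    have := hle (-z) (N.neg_mem hzN) 1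
    simp only [one_smul, neg_add_cancel, map_zero] at this
    exact absurd (hN z hzN hz0) (not_lt.2 (by simpa using this))
  rw [← Submodule.finrank_sup_span_singleton hzN]
  refine finrank_le_negIndex fun w hw hw0 => ?_
  obtain ⟨n, hn, _, ht, rfl⟩ := Submodule.mem_sup.1 hw
  obtain ⟨t, rfl⟩ := Submodule.mem_span_singleton.1 ht
  by_cases hn0 : n = 0
  · subst hn0
    have ht : t ≠ 0 := by rintro rfl; simp at hw0
    simpa [mul_assoc] using mul_neg_of_pos_of_neg (mul_self_pos.2 ht) hz
  · exact (hle n hn t).trans_lt (hN n hn hn0)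

lemma apply_self_nonneg_of_mem_orthogonal {b : BilinForm ℝ E} (hb : b.IsSymm)
    {N : Submodule ℝ E} (hN : b.IsNegDefOn N) (hNfin : finrank ℝ N = b.negIndex) {z : E}
    (hz : z ∈ b.orthogonal N) : 0 ≤ b z z := by
  by_contra! hzz
  have := finrank_add_one_le_negIndex hN hzz fun n hn t => by
    have hnz : b n z = 0 := hz n hn
    have hzn : b z n = 0 := by rw [hb.eq, hnz]
    simp only [map_add, map_smul, LinearMap.add_apply, LinearMap.smul_apply, smul_eq_mul,
      hnz, hzn]
    nlinarith [mul_self_nonneg t]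
  omega

lemma IsNegDefOn.isCompl_orthogonal {b : BilinForm ℝ E} (hb : b.IsRefl) {N : Submodule ℝ E}
    (hN : b.IsNegDefOn N) : IsCompl N (b.orthogonal N) := by
  refine (isCompl_orthogonal_iff_disjoint hb).2 (Submodule.disjoint_def.2 fun v hvN hvo => ?_)
  by_contra hv0
  exact (hN v hvN hv0).ne (hvo v hvN)

theorem apply_self_eq_zero_of_mem_ker_of_stein {b c : BilinForm ℝ E} {f : E →ₗ[ℝ] E}
    (hb : b.IsSymm) (hc : ∀ v, 0 ≤ c v v) (hstein : ∀ u v, b u v = b (f u) (f v) + c u v)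
    {x : E} (hx : x ∈ LinearMap.ker b) : c x x = 0 := by
  have hxv : ∀ v, b x v = 0 := fun v => by rw [LinearMap.mem_ker.1 hx, LinearMap.zero_apply]
  obtain ⟨N, hN, hNfin⟩ := b.exists_isNegDefOn_finrank_eq_negIndex
  refine le_antisymm (not_lt.1 fun hpos => ?_) (hc x)
  have hcomp : ∀ u, b.comp f f u u = b u u - c u u := fun u => by
    rw [comp_apply, hstein u u]; ring
  have := finrank_add_one_le_negIndex (b' := b.comp f f) hN (z := x)
    (by rw [hcomp, hxv]; linarith) fun n hn t => by
      have hexp : b (n + t • x) (n + t • x) = b n n := by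
        simp only [map_add, map_smul, LinearMap.add_apply, LinearMap.smul_apply, smul_eq_mul,
          hxv, hb.eq n x]
        ring
      linarith [hcomp (n + t • x), hc (n + t • x)]
  have := b.negIndex_comp_le f
  omega

theorem map_mem_ker_of_stein {b c : BilinForm ℝ E} {f : E →ₗ[ℝ] E}
    (hb : b.IsSymm) (hc : ∀ v, 0 ≤ c v v) (hstein : ∀ u v, b u v = b (f u) (f v) + c u v)
    {x : E} (hx : x ∈ LinearMap.ker b) : f x ∈ LinearMap.ker b := by
  have hxv : ∀ v, b x v = 0 := fun v => by rw [LinearMap.mem_ker.1 hx, LinearMap.zero_apply]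
  have hcsymm : c.IsSymm := ⟨fun u v => by
    linarith [hstein u v, hstein v u, hb.eq u v, hb.eq (f u) (f v)]⟩
  have hcx : ∀ v, c x v = 0 := fun v => apply_eq_zero_of_apply_self_eq_zero hcsymm
    (apply_self_eq_zero_of_mem_ker_of_stein hb hc hstein hx) fun _ => hc _
  have hfx : ∀ v, b (f v) (f x) = 0 := fun v => by
    linarith [hstein x v, hxv v, hcx v, hb.eq (f v) (f x)]
  obtain ⟨N, hN, hNfin⟩ := b.exists_isNegDefOn_finrank_eq_negIndex
  have hNcomp : (b.comp f f).IsNegDefOn N := fun n hn hn0 => by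
    linarith [comp_apply b f f n n, hstein n n, hc n, hN n hn hn0]
  set M := N.map f
  have hM : b.IsNegDefOn M := isNegDefOn_map_of_comp hNcomp
  have hMfin : finrank ℝ M = b.negIndex :=
    (finrank_map_eq_of_isNegDefOn_comp hNcomp).trans hNfin
  have hfxM : f x ∈ b.orthogonal M := by
    rintro _ ⟨n, -, rfl⟩
    exact hfx n
  refine LinearMap.mem_ker.2 (LinearMap.ext fun w => ?_)
  have hw : w ∈ M ⊔ b.orthogonal M := by
    rw [(hM.isCompl_orthogonal hb.isRefl).sup_eq_top]
    exact Submodule.mem_top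
  obtain ⟨m, hm, z, hz, rfl⟩ := Submodule.mem_sup.1 hw
  have hfxz : b (f x) z = 0 :=
    apply_eq_zero_of_apply_self_eq_zero hb (hfx x) fun t =>
      apply_self_nonneg_of_mem_orthogonal hb hM hMfin
        ((b.orthogonal M).add_mem hfxM ((b.orthogonal M).smul_mem t hz))
  rw [map_add, hb.eq, hfxM m hm, hfxz, add_zero, LinearMap.zero_apply]

end LinearMap.BilinForm

namespace Matrix

variable {m n p : Type*} [Fintype m] [Fintype n] [Fintype p] {α : Type*} [CommRing α]

theorem transpose_eq_of_penrose {R Y : Matrix m m α} (hR : Rᵀ = R)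
    (h₁ : R * Y * R = R) (h₂ : Y * R * Y = Y)
    (h₃ : (R * Y)ᵀ = R * Y) (h₄ : (Y * R)ᵀ = Y * R) : Yᵀ = Y := by
  have h₁' : R * Yᵀ * R = R := by
    simpa only [transpose_mul, hR, mul_assoc] using congrArg transpose h₁
  have h₂' : Yᵀ * R * Yᵀ = Yᵀ := by
    simpa only [transpose_mul, hR, mul_assoc] using congrArg transpose h₂
  have h₃' : Yᵀ * R = R * Y := by rw [← h₃, transpose_mul, hR]
  have h₄' : R * Yᵀ = Y * R := by rw [← h₄, transpose_mul, hR]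
  have hY : Y * Y * R = Y := calc
    Y * Y * R = Y * R * Y * Y * R := by rw [h₂]
    _ = Y * (Yᵀ * R) * (Y * R) := by rw [h₃']; simp only [mul_assoc]
    _ = Y * Yᵀ * (R * Y * R) := by simp only [mul_assoc]
    _ = Y * (Yᵀ * R) := by rw [h₁, mul_assoc]
    _ = Y * R * Y := by rw [h₃', mul_assoc]
    _ = Y := h₂
  calc Yᵀ = Yᵀ * R * Yᵀ := h₂'.symm
    _ = R * Yᵀ * R * Y * Yᵀ := by rw [h₃', h₁']
    _ = R * Yᵀ * (Yᵀ * R * Yᵀ) := by rw [h₃']; simp only [mul_assoc]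
    _ = Y := by rw [h₂', h₄', mul_assoc, h₄', ← mul_assoc, hY]

theorem closedLoop_expand {A X : Matrix n n α} {B : Matrix n m α} {C : Matrix p n α}
    {D : Matrix p m α} (hX : Xᵀ = X) (K : Matrix m n α) :
    (A - B * K)ᵀ * X * (A - B * K) + (C - D * K)ᵀ * (C - D * K)
      = Aᵀ * X * A + Cᵀ * C - (Aᵀ * X * B + Cᵀ * D) * K - Kᵀ * (Aᵀ * X * B + Cᵀ * D)ᵀ
        + Kᵀ * (Dᵀ * D + Bᵀ * X * B) * K := by
  simp only [transpose_sub, transpose_add, transpose_mul, transpose_transpose, hX,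
    Matrix.sub_mul, Matrix.mul_sub, Matrix.add_mul, Matrix.mul_add, Matrix.mul_assoc]
  abel

theorem riccati_eq_closedLoop {A X : Matrix n n α}
    {B : Matrix n m α} {C : Matrix p n α} {D : Matrix p m α} {Y : Matrix m m α}
    (hX : Xᵀ = X) (hY : Yᵀ = Y) (hYRY : Y * (Dᵀ * D + Bᵀ * X * B) * Y = Y) :
    Aᵀ * X * A - (Aᵀ * X * B + Cᵀ * D) * Y * (Aᵀ * X * B + Cᵀ * D)ᵀ + Cᵀ * C
      = (A - B * (Y * (Aᵀ * X * B + Cᵀ * D)ᵀ))ᵀ * X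
          * (A - B * (Y * (Aᵀ * X * B + Cᵀ * D)ᵀ))
        + (C - D * (Y * (Aᵀ * X * B + Cᵀ * D)ᵀ))ᵀ
          * (C - D * (Y * (Aᵀ * X * B + Cᵀ * D)ᵀ)) := by
  rw [closedLoop_expand hX, transpose_mul, transpose_transpose, hY]
  generalize Aᵀ * X * B + Cᵀ * D = S at *
  generalize Dᵀ * D + Bᵀ * X * B = R at *
  have hSYRYS : S * Y * R * (Y * Sᵀ) = S * Y * Sᵀ := by
    rw [← Matrix.mul_assoc, Matrix.mul_assoc S, Matrix.mul_assoc S, hYRY]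
  rw [hSYRYS, ← Matrix.mul_assoc]
  abel

variable [DecidableEq n]

lemma mem_ker_toBilin'_iff {X : Matrix n n ℝ} (hX : Xᵀ = X) {x : n → ℝ} :
    x ∈ LinearMap.ker (toBilin' X) ↔ X *ᵥ x = 0 := by
  rw [LinearMap.mem_ker, ← dotProduct_eq_zero_iff, LinearMap.ext_iff]
  refine forall_congr' fun v => ?_
  rw [toBilin'_apply', dotProduct_mulVec, ← mulVec_transpose, hX, LinearMap.zero_apply]

theorem mulVec_eq_zero_of_stein_s9 {X F : Matrix n n ℝ} {G : Matrix p n ℝ} (hX : Xᵀ = X)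
    (hstein : X = Fᵀ * X * F + Gᵀ * G) {x : n → ℝ} (hx : X *ᵥ x = 0) :
    X *ᵥ (F *ᵥ x) = 0 ∧ G *ᵥ x = 0 := by
  have hb : (toBilin' X).IsSymm := isSymm_toBilin'_iff_isSymm.2 hX
  have hc : ∀ v, 0 ≤ toBilin' (Gᵀ * G) v v := fun v => by
    rw [toBilin'_apply', ← mulVec_mulVec, dotProduct_mulVec, ← mulVec_transpose,
      transpose_transpose]
    exact dotProduct_self_star_nonneg _
  have hbc : ∀ u v,
      toBilin' X u v = toBilin' X (toLin' F u) (toLin' F v) + toBilin' (Gᵀ * G) u v := by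
    intro u v
    rw [← LinearMap.BilinForm.comp_apply, toBilin'_comp, ← LinearMap.add_apply,
      ← LinearMap.add_apply, ← map_add, ← hstein]
  have hxker := (mem_ker_toBilin'_iff hX).2 hx
  refine ⟨(mem_ker_toBilin'_iff hX).1
    (LinearMap.BilinForm.map_mem_ker_of_stein hb hc hbc hxker), ?_⟩
  have := LinearMap.BilinForm.apply_self_eq_zero_of_mem_ker_of_stein hb hc hbc hxker
  rwa [toBilin'_apply', ← mulVec_mulVec, dotProduct_mulVec, ← mulVec_transpose,
    transpose_transpose, dotProduct_self_eq_zero] at this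

end Matrix

theorem stmt_9 (n m p : ℕ)
    (A : Matrix (Fin n) (Fin n) ℝ) (B : Matrix (Fin n) (Fin m) ℝ)
    (C : Matrix (Fin p) (Fin n) ℝ) (D : Matrix (Fin p) (Fin m) ℝ)
    (X : Matrix (Fin n) (Fin n) ℝ) (hX : Xᵀ = X)
    (RXd : Matrix (Fin m) (Fin m) ℝ)
    (pen1 : (Dᵀ * D + Bᵀ * X * B) * RXd * (Dᵀ * D + Bᵀ * X * B) = Dᵀ * D + Bᵀ * X * B)
    (pen2 : RXd * (Dᵀ * D + Bᵀ * X * B) * RXd = RXd)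
    (pen3 : ((Dᵀ * D + Bᵀ * X * B) * RXd)ᵀ = (Dᵀ * D + Bᵀ * X * B) * RXd)
    (pen4 : (RXd * (Dᵀ * D + Bᵀ * X * B))ᵀ = RXd * (Dᵀ * D + Bᵀ * X * B))
    (hGDARE : X = Aᵀ * X * A
        - (Aᵀ * X * B + Cᵀ * D) * RXd * (Aᵀ * X * B + Cᵀ * D)ᵀ + Cᵀ * C) :
    ∀ x : Fin n → ℝ, X.mulVec x = 0 →
      X.mulVec ((A - B * (RXd * (Aᵀ * X * B + Cᵀ * D)ᵀ)).mulVec x) = 0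
      ∧ (C - D * (RXd * (Aᵀ * X * B + Cᵀ * D)ᵀ)).mulVec x = 0 := by
  intro x hx
  have hR : (Dᵀ * D + Bᵀ * X * B)ᵀ = Dᵀ * D + Bᵀ * X * B := by
    simp only [transpose_add, transpose_mul, transpose_transpose, hX, Matrix.mul_assoc]
  have hRXd : RXdᵀ = RXd := transpose_eq_of_penrose hR pen1 pen2 pen3 pen4
  exact mulVec_eq_zero_of_stein_s9 hX (hGDARE.trans (riccati_eq_closedLoop hX hRXd pen2)) hx
end

section
/- Assume the Popov matrix Π = [[Q, S],[Sᵀ, R]] is positive semidefinite. If X is a symmetric solution of CGDARE(Σ), then ker R_X ⊆ ker R; equivalently, R G_X = 0. -/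
/-! Since `ker R_X ⊆ ker S_X`, the gain `K = R_X† S_Xᵀ` satisfies `R_X K = S_Xᵀ`, and the
Riccati equation completes the square in the Popov form:
`[x; u]ᵀ Π [x; u] = xᵀXx - (Ax + Bu)ᵀX(Ax + Bu) + (u + Kx)ᵀR_X(u + Kx)`.
For `v ∈ ker R_X` and `w = Bv`, the input `u = t v - Kx` kills the last term, so `Π ≥ 0` makes
`V x = xᵀXx` non-increasing along `x ↦ (A - BK)x + t w`. By Cayley–Hamilton a suitable choice of
the `t`'s steers `w` to `0`, hence `wᵀXw ≥ 0`; then `0 = vᵀR_X v = vᵀRv + wᵀXw` and `R ≥ 0`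
force `vᵀRv = 0`, i.e. `Rv = 0`. -/

open Matrix

namespace Matrix

variable {ι κ R : Type*} [Fintype ι] [Fintype κ] [CommRing R]

structure IsMoorePenroseInverse (M : Matrix ι κ R) (D : Matrix κ ι R) : Prop where
  mul_mul_self : M * D * M = M
  mul_self_mul : D * M * D = D
  transpose_mul_left : (M * D)ᵀ = M * D
  transpose_mul_right : (D * M)ᵀ = D * M

theorem IsMoorePenroseInverse.transpose_eq {M D : Matrix ι ι R} (hD : IsMoorePenroseInverse M D)
    (hM : Mᵀ = M) : Dᵀ = D := by
  have hMD : M * D = Dᵀ * M := by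
    rw [← hD.transpose_mul_left, transpose_mul, hM]
  have hDM : D * M = M * Dᵀ := by
    rw [← hD.transpose_mul_right, transpose_mul, hM]
  have hD_eq : D = D * M * Dᵀ := calc
    D = D * (M * D) := by rw [← Matrix.mul_assoc, hD.mul_self_mul]
    _ = D * Dᵀ * (M * D * M) := by rw [hD.mul_mul_self, hMD, Matrix.mul_assoc]
    _ = D * (Dᵀ * M) * (D * M) := by simp only [Matrix.mul_assoc]
    _ = D * (M * D) * (M * Dᵀ) := by rw [← hMD, hDM]
    _ = D * M * Dᵀ := by
      rw [← Matrix.mul_assoc, ← Matrix.mul_assoc, hD.mul_self_mul, Matrix.mul_assoc]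
  rw [hD_eq, transpose_mul, transpose_mul, transpose_transpose, hM, Matrix.mul_assoc]

theorem mul_one_sub_mul_eq_zero_of_ker_le [DecidableEq κ] {ν : Type*} {M : Matrix ι κ R}
    {D : Matrix κ ι R} {N : Matrix ν κ R} (hMDM : M * D * M = M)
    (hker : ∀ v, M *ᵥ v = 0 → N *ᵥ v = 0) : N * (1 - D * M) = 0 := by
  refine ext_of_mulVec_single fun j => ?_
  rw [← mulVec_mulVec, zero_mulVec]
  refine hker _ ?_
  rw [mulVec_mulVec, Matrix.mul_sub, Matrix.mul_one, ← Matrix.mul_assoc, hMDM, sub_self,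
    zero_mulVec]

theorem apply_zero_le_of_forall_mulVec_add_smul_le [DecidableEq ι] {α : Type*} [Preorder α]
    (M : Matrix ι ι R) (w : ι → R) (V : (ι → R) → α)
    (hV : ∀ x (t : R), V (M *ᵥ x + t • w) ≤ V x) : V 0 ≤ V w := by
  have reach : ∀ (d : ℕ) (a : ℕ → R),
      V ((M ^ d + ∑ j ∈ Finset.range d, a j • M ^ j) *ᵥ w) ≤ V w := by
    intro d
    induction d with
    | zero => intro a; simp
    | succ d ih =>
      intro a
      have hsplit : M ^ (d + 1) + ∑ j ∈ Finset.range (d + 1), a j • M ^ j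
          = M * (M ^ d + ∑ j ∈ Finset.range d, a (j + 1) • M ^ j) + a 0 • 1 := by
        rw [Finset.sum_range_succ', Matrix.mul_add, Finset.mul_sum, pow_succ', pow_zero]
        simp only [Matrix.mul_smul, pow_succ']
        abel
      rw [hsplit, add_mulVec, ← mulVec_mulVec, smul_mulVec, one_mulVec]
      exact (hV _ _).trans (ih _)
  have hCH : M ^ M.charpoly.natDegree
      + ∑ j ∈ Finset.range M.charpoly.natDegree, M.charpoly.coeff j • M ^ j = 0 := by
    have h := aeval_self_charpoly M
    rwa [Polynomial.aeval_eq_sum_range, Finset.sum_range_succ,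
      (charpoly_monic M).coeff_natDegree, one_smul, add_comm] at h
  simpa only [hCH, zero_mulVec] using reach M.charpoly.natDegree M.charpoly.coeff

theorem mulVec_dotProduct {ν : Type*} [Fintype ν] (M : Matrix ι ν R) (a : ν → R) (b : ι → R) :
    (M *ᵥ a) ⬝ᵥ b = a ⬝ᵥ (Mᵀ *ᵥ b) := by
  rw [dotProduct_comm, dotProduct_mulVec, ← mulVec_transpose, dotProduct_comm]

end Matrix

section Riccati

variable {ι κ : Type*} [Fintype ι] [Fintype κ]

theorem popov_form_eq_sub_add_sq {A X : Matrix ι ι ℝ} {B : Matrix ι κ ℝ}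
    {K : Matrix κ ι ℝ} {P R : Matrix κ κ ℝ} {Q : Matrix ι ι ℝ} {S : Matrix ι κ ℝ}
    (hX : Xᵀ = X) (hP : Pᵀ = P) (hQ : Q = X - Aᵀ * X * A + Kᵀ * (P * K))
    (hS : S = Kᵀ * P - Aᵀ * X * B) (hR : R = P - Bᵀ * X * B) (x : ι → ℝ) (u : κ → ℝ) :
    Sum.elim x u ⬝ᵥ (fromBlocks Q S Sᵀ R *ᵥ Sum.elim x u)
      = x ⬝ᵥ (X *ᵥ x) - (A *ᵥ x + B *ᵥ u) ⬝ᵥ (X *ᵥ (A *ᵥ x + B *ᵥ u))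
        + (u + K *ᵥ x) ⬝ᵥ (P *ᵥ (u + K *ᵥ x)) := by
  subst hQ hS hR
  rw [fromBlocks_mulVec, Sum.elim_comp_inl, Sum.elim_comp_inr, sumElim_dotProduct_sumElim]
  simp only [sub_mulVec, add_mulVec, mulVec_add, dotProduct_add, add_dotProduct, dotProduct_sub,
    mulVec_dotProduct, mulVec_mulVec, transpose_sub, transpose_mul, transpose_transpose,
    Matrix.mul_assoc, hX, hP]
  ring


variable [DecidableEq κ] {A X Q : Matrix ι ι ℝ} {B S : Matrix ι κ ℝ} {R D : Matrix κ κ ℝ}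

theorem popov_form_eq_of_cgdare (hR : Rᵀ = R) (hX : Xᵀ = X)
    (hD : IsMoorePenroseInverse (R + Bᵀ * X * B) D)
    (hGDARE : X = Aᵀ * X * A - (Aᵀ * X * B + S) * D * (Aᵀ * X * B + S)ᵀ + Q)
    (hker : ∀ v, (R + Bᵀ * X * B) *ᵥ v = 0 → (Aᵀ * X * B + S) *ᵥ v = 0)
    (x : ι → ℝ) (u : κ → ℝ) :
    let K := D * (Aᵀ * X * B + S)ᵀ
    Sum.elim x u ⬝ᵥ (fromBlocks Q S Sᵀ R *ᵥ Sum.elim x u)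
      = x ⬝ᵥ (X *ᵥ x) - (A *ᵥ x + B *ᵥ u) ⬝ᵥ (X *ᵥ (A *ᵥ x + B *ᵥ u))
        + (u + K *ᵥ x) ⬝ᵥ ((R + Bᵀ * X * B) *ᵥ (u + K *ᵥ x)) := by
  set RX := R + Bᵀ * X * B with hRX
  set SX := Aᵀ * X * B + S with hSX
  intro K
  have hRX_symm : RXᵀ = RX := by
    simp only [hRX, transpose_add, transpose_mul, transpose_transpose, hR, hX, Matrix.mul_assoc]
  have hD_symm : Dᵀ = D := hD.transpose_eq hRX_symm
  have hSX_DRX : SX * (D * RX) = SX := by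
    have h := mul_one_sub_mul_eq_zero_of_ker_le hD.mul_mul_self hker
    rwa [Matrix.mul_sub, Matrix.mul_one, sub_eq_zero, eq_comm] at h
  have hKtRX : Kᵀ * RX = SX := by
    rw [transpose_mul, transpose_transpose, hD_symm, Matrix.mul_assoc, hSX_DRX]
  have hRXK : RX * K = SXᵀ := by
    rw [← hRX_symm, ← transpose_transpose K, ← transpose_mul, hKtRX]
  refine popov_form_eq_sub_add_sq hX hRX_symm ?_ ?_ (by rw [hRX]; abel) x u
  · rw [hRXK, transpose_mul, hD_symm]
    nth_rewrite 1 [hGDARE]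
    simp only [transpose_transpose, Matrix.mul_assoc]
    abel
  · rw [hKtRX, hSX]; abel

theorem mulVec_eq_zero_of_cgdare [DecidableEq ι] (hR : Rᵀ = R) (hX : Xᵀ = X)
    (hPi : (fromBlocks Q S Sᵀ R).PosSemidef) (hD : IsMoorePenroseInverse (R + Bᵀ * X * B) D)
    (hGDARE : X = Aᵀ * X * A - (Aᵀ * X * B + S) * D * (Aᵀ * X * B + S)ᵀ + Q)
    (hker : ∀ v, (R + Bᵀ * X * B) *ᵥ v = 0 → (Aᵀ * X * B + S) *ᵥ v = 0)
    {v : κ → ℝ} (hv : (R + Bᵀ * X * B) *ᵥ v = 0) : R *ᵥ v = 0 := by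
  set K := D * (Aᵀ * X * B + S)ᵀ
  set w := B *ᵥ v
  have hstep : ∀ x (t : ℝ), ((A - B * K) *ᵥ x + t • w) ⬝ᵥ (X *ᵥ ((A - B * K) *ᵥ x + t • w))
      ≤ x ⬝ᵥ (X *ᵥ x) := by
    intro x t
    have h := hPi.dotProduct_mulVec_nonneg (Sum.elim x (t • v - K *ᵥ x))
    have hu : t • v - K *ᵥ x + K *ᵥ x = t • v := sub_add_cancel _ _
    have hAx : A *ᵥ x + B *ᵥ (t • v - K *ᵥ x) = (A - B * K) *ᵥ x + t • w := by
      rw [sub_mulVec, mulVec_sub, mulVec_smul, mulVec_mulVec]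
      abel
    rw [star_trivial, popov_form_eq_of_cgdare hR hX hD hGDARE hker, hu, hAx, mulVec_smul, hv,
      smul_zero, dotProduct_zero] at h
    linarith
  have hw : 0 ≤ w ⬝ᵥ (X *ᵥ w) := by
    simpa using
      apply_zero_le_of_forall_mulVec_add_smul_le (A - B * K) w (fun y => y ⬝ᵥ (X *ᵥ y)) hstep
  have hR_psd : R.PosSemidef := hPi.submatrix Sum.inr
  have hvRv : v ⬝ᵥ (R *ᵥ v) + w ⬝ᵥ (X *ᵥ w) = 0 := by
    rw [← dotProduct_zero v, ← hv, add_mulVec, dotProduct_add, ← mulVec_mulVec,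
      ← mulVec_mulVec, ← mulVec_dotProduct]
  have hvRv_nonneg : 0 ≤ v ⬝ᵥ (R *ᵥ v) := by
    simpa only [star_trivial] using hR_psd.dotProduct_mulVec_nonneg v
  refine (hR_psd.dotProduct_mulVec_zero_iff v).mp ?_
  rw [star_trivial]
  linarith

end Riccati

theorem stmt_10_general (n m : ℕ)
    (A : Matrix (Fin n) (Fin n) ℝ) (B : Matrix (Fin n) (Fin m) ℝ)
    (Q : Matrix (Fin n) (Fin n) ℝ) (S : Matrix (Fin n) (Fin m) ℝ)
    (R : Matrix (Fin m) (Fin m) ℝ)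
    (hR : Rᵀ = R)
    (hPi : (Matrix.fromBlocks Q S Sᵀ R).PosSemidef)
    (X : Matrix (Fin n) (Fin n) ℝ) (hX : Xᵀ = X)
    (RXd : Matrix (Fin m) (Fin m) ℝ)
    (pen1 : (R + Bᵀ * X * B) * RXd * (R + Bᵀ * X * B) = R + Bᵀ * X * B)
    (pen2 : RXd * (R + Bᵀ * X * B) * RXd = RXd)
    (pen3 : ((R + Bᵀ * X * B) * RXd)ᵀ = (R + Bᵀ * X * B) * RXd)
    (pen4 : (RXd * (R + Bᵀ * X * B))ᵀ = RXd * (R + Bᵀ * X * B))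
    (hGDARE : X = Aᵀ * X * A - (Aᵀ * X * B + S) * RXd * (Aᵀ * X * B + S)ᵀ + Q)
    (hker : ∀ v : Fin m → ℝ, (R + Bᵀ * X * B).mulVec v = 0 → (Aᵀ * X * B + S).mulVec v = 0) :
    (∀ v : Fin m → ℝ, (R + Bᵀ * X * B).mulVec v = 0 → R.mulVec v = 0)
    ∧ R * (1 - RXd * (R + Bᵀ * X * B)) = 0 := by
  have hD : IsMoorePenroseInverse (R + Bᵀ * X * B) RXd := ⟨pen1, pen2, pen3, pen4⟩
  have hker_R : ∀ v, (R + Bᵀ * X * B) *ᵥ v = 0 → R *ᵥ v = 0 := fun _ hv =>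
    mulVec_eq_zero_of_cgdare hR hX hPi hD hGDARE hker hv
  exact ⟨hker_R, mul_one_sub_mul_eq_zero_of_ker_le pen1 hker_R⟩

theorem stmt_10 (n m : ℕ)
    (A : Matrix (Fin n) (Fin n) ℝ) (B : Matrix (Fin n) (Fin m) ℝ)
    (Q : Matrix (Fin n) (Fin n) ℝ) (S : Matrix (Fin n) (Fin m) ℝ)
    (R : Matrix (Fin m) (Fin m) ℝ)
    (hQ : Qᵀ = Q) (hR : Rᵀ = R)
    (hPi : (Matrix.fromBlocks Q S Sᵀ R).PosSemidef)
    (X : Matrix (Fin n) (Fin n) ℝ) (hX : Xᵀ = X)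
    (RXd : Matrix (Fin m) (Fin m) ℝ)
    (pen1 : (R + Bᵀ * X * B) * RXd * (R + Bᵀ * X * B) = R + Bᵀ * X * B)
    (pen2 : RXd * (R + Bᵀ * X * B) * RXd = RXd)
    (pen3 : ((R + Bᵀ * X * B) * RXd)ᵀ = (R + Bᵀ * X * B) * RXd)
    (pen4 : (RXd * (R + Bᵀ * X * B))ᵀ = RXd * (R + Bᵀ * X * B))
    (hGDARE : X = Aᵀ * X * A - (Aᵀ * X * B + S) * RXd * (Aᵀ * X * B + S)ᵀ + Q)
    (hker : ∀ v : Fin m → ℝ, (R + Bᵀ * X * B).mulVec v = 0 → (Aᵀ * X * B + S).mulVec v = 0) :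
    (∀ v : Fin m → ℝ, (R + Bᵀ * X * B).mulVec v = 0 → R.mulVec v = 0)
    ∧ R * (1 - RXd * (R + Bᵀ * X * B)) = 0 :=
  stmt_10_general n m A B Q S R hR hPi X hX RXd pen1 pen2 pen3 pen4 hGDARE hker
end

section
/- Let C ∈ ℝ^{p×n} and D ∈ ℝ^{p×m} be such that Q = CᵀC, S = CᵀD and R = DᵀD. If X is a symmetric solution of CGDARE(Σ), then the reachable subspace ℛ₀ of the pair (A_X, B G_X) is contained in ker C_X, where C_X = C − D K_X; that is, C_X A_X^k B G_X = 0 for every k ≥ 0. -/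
/-!
Closing the loop with the gain `K_X` turns the Riccati equation into the dissipation identity
`q (A_X x + B G_X v) + ‖C_X x + D G_X v‖² = q x` for `q x = xᵀ X x`. The state terms reduce to
the Riccati equation because `R_X K_X = S_Xᵀ`, and the cross and input terms vanish because
`R_X G_X = 0` and, by the kernel condition, `S_X G_X = 0`. Hence `q` does not increase along
the closed loop. In finite dimension every reachable state is reached from `0` and can be steered
back to `0`, so `q` vanishes on the reachable subspace, and the identity with `v = 0` then forces
`C_X x = 0` there.
-/

open Matrix

namespace LinearMap

variable {K M U : Type*} [Ring K] [AddCommGroup M] [Module K M] [AddCommGroup U] [Module K U]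

def reachableIn (A : M →ₗ[K] M) (W : U →ₗ[K] M) : ℕ → Submodule K M
  | 0 => ⊥
  | T + 1 => (reachableIn A W T).map A ⊔ range W

variable {A : M →ₗ[K] M} {W : U →ₗ[K] M}

theorem reachableIn_mono : Monotone (reachableIn A W) := by
  refine monotone_nat_of_le_succ fun T => ?_
  induction T with
  | zero => exact bot_le
  | succ T ih => exact sup_le_sup_right (Submodule.map_mono ih) _

theorem apply_mem_reachableIn_succ {T : ℕ} {x : M} (hx : x ∈ reachableIn A W T) :
    A x ∈ reachableIn A W (T + 1) :=
  Submodule.mem_sup_left (Submodule.mem_map_of_mem hx)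

theorem pow_apply_mem_reachableIn {T : ℕ} {x : M} (hx : x ∈ reachableIn A W T) (k : ℕ) :
    (A ^ k) x ∈ reachableIn A W (T + k) := by
  induction k with
  | zero => exact hx
  | succ k ih =>
    rw [pow_succ', Module.End.mul_apply]
    exact apply_mem_reachableIn_succ ih

theorem mem_reachableIn_one (v : U) : W v ∈ reachableIn A W 1 :=
  Submodule.mem_sup_right (mem_range_self W v)

theorem exists_reachableIn_eq [IsNoetherian K M] :
    ∃ N, ∀ T, N ≤ T → reachableIn A W T = reachableIn A W N := by
  obtain ⟨N, hN⟩ := monotone_stabilizes_iff_noetherian.mpr inferInstance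
    ⟨reachableIn A W, reachableIn_mono⟩
  exact ⟨N, fun T hT => (hN T hT).symm⟩

variable {α : Type*} [PartialOrder α] {q : M → α}

theorem apply_pow_add_le_of_mem_reachableIn (hq : ∀ x v, q (A x + W v) ≤ q x) {T : ℕ} {r : M}
    (hr : r ∈ reachableIn A W T) (x : M) : q ((A ^ T) x + r) ≤ q x := by
  induction T generalizing r with
  | zero =>
    rw [reachableIn, Submodule.mem_bot] at hr
    simp [hr]
  | succ T ih =>
    obtain ⟨_, ⟨s, hs, rfl⟩, _, ⟨v, rfl⟩, rfl⟩ := Submodule.mem_sup.mp hr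
    calc q ((A ^ (T + 1)) x + (A s + W v)) = q (A ((A ^ T) x + s) + W v) := by
          rw [pow_succ', Module.End.mul_apply, map_add, add_assoc]
      _ ≤ q ((A ^ T) x + s) := hq _ v
      _ ≤ q x := ih hs

theorem eq_of_mem_reachableIn [IsNoetherian K M] (hq : ∀ x v, q (A x + W v) ≤ q x) {T : ℕ}
    {x : M} (hx : x ∈ reachableIn A W T) : q x = q 0 := by
  refine le_antisymm ?_ ?_
  · simpa using apply_pow_add_le_of_mem_reachableIn hq hx 0
  · obtain ⟨N, hN⟩ := exists_reachableIn_eq (A := A) (W := W)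
    set N' := max N T
    have hx' : x ∈ reachableIn A W N' := reachableIn_mono (le_max_right N T) hx
    have hback : -(A ^ N') x ∈ reachableIn A W N' := by
      rw [hN N' (le_max_left _ _), ← hN (N' + N') (by omega)]
      exact neg_mem (pow_apply_mem_reachableIn hx' N')
    simpa using apply_pow_add_le_of_mem_reachableIn hq hback x

end LinearMap

section Matrix

variable {ι μ π 𝕜 : Type*}

theorem mulVec_dotProduct_mulVec [CommSemiring 𝕜] {κ : Type*} [Fintype ι] [Fintype μ]
    [Fintype κ] (P : Matrix κ ι 𝕜) (Q : Matrix κ μ 𝕜) (x : ι → 𝕜) (w : μ → 𝕜) :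
    P *ᵥ x ⬝ᵥ Q *ᵥ w = x ⬝ᵥ (Pᵀ * Q) *ᵥ w := by
  symm
  rw [← mulVec_mulVec, dotProduct_mulVec, vecMul_transpose]

theorem dissipation_eq_of_closedLoop [CommRing 𝕜] [Fintype ι] [Fintype μ] [Fintype π]
    {X F : Matrix ι ι 𝕜} {W : Matrix ι μ 𝕜} {H : Matrix π ι 𝕜} {E : Matrix π μ 𝕜} (hX : Xᵀ = X)
    (hF : Fᵀ * X * F + Hᵀ * H = X) (hFW : Fᵀ * X * W + Hᵀ * E = 0)
    (hW : Wᵀ * X * W + Eᵀ * E = 0) (x : ι → 𝕜) (v : μ → 𝕜) :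
    (F *ᵥ x + W *ᵥ v) ⬝ᵥ X *ᵥ (F *ᵥ x + W *ᵥ v) + (H *ᵥ x + E *ᵥ v) ⬝ᵥ (H *ᵥ x + E *ᵥ v)
      = x ⬝ᵥ X *ᵥ x := by
  have hWF : Wᵀ * X * F + Eᵀ * H = 0 := by
    simpa [transpose_add, transpose_mul, hX, Matrix.mul_assoc] using congrArg transpose hFW
  have expand :
      (F *ᵥ x + W *ᵥ v) ⬝ᵥ X *ᵥ (F *ᵥ x + W *ᵥ v) + (H *ᵥ x + E *ᵥ v) ⬝ᵥ (H *ᵥ x + E *ᵥ v)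
        = x ⬝ᵥ (Fᵀ * X * F + Hᵀ * H) *ᵥ x + x ⬝ᵥ (Fᵀ * X * W + Hᵀ * E) *ᵥ v
          + v ⬝ᵥ (Wᵀ * X * F + Eᵀ * H) *ᵥ x + v ⬝ᵥ (Wᵀ * X * W + Eᵀ * E) *ᵥ v := by
    simp only [mulVec_add, dotProduct_add, add_dotProduct, add_mulVec, mulVec_mulVec,
      mulVec_dotProduct_mulVec, Matrix.mul_assoc]
    ring
  rw [expand, hF, hFW, hWF, hW]
  simp

theorem mul_pow_mul_eq_zero_of_dissipation [Field 𝕜] [LinearOrder 𝕜] [IsStrictOrderedRing 𝕜]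
    [Fintype ι] [Fintype μ] [Fintype π] [DecidableEq ι] [DecidableEq μ] {F : Matrix ι ι 𝕜}
    {W : Matrix ι μ 𝕜} {H : Matrix π ι 𝕜} {E : Matrix π μ 𝕜} {q : (ι → 𝕜) → 𝕜}
    (hq : ∀ x v, q (F *ᵥ x + W *ᵥ v) + (H *ᵥ x + E *ᵥ v) ⬝ᵥ (H *ᵥ x + E *ᵥ v) = q x) (k : ℕ) :
    H * F ^ k * W = 0 := by
  have hdec : ∀ x v, q (F.toLin' x + W.toLin' v) ≤ q x := fun x v => by
    have : 0 ≤ (H *ᵥ x + E *ᵥ v) ⬝ᵥ (H *ᵥ x + E *ᵥ v) :=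
      Finset.sum_nonneg fun _ _ => mul_self_nonneg _
    simp only [toLin'_apply]
    linarith [hq x v]
  refine ext_of_mulVec_single fun j => ?_
  set x := (F ^ k) *ᵥ W *ᵥ Pi.single j 1
  have hx : x ∈ LinearMap.reachableIn F.toLin' W.toLin' (1 + k) := by
    have := LinearMap.pow_apply_mem_reachableIn (LinearMap.mem_reachableIn_one (A := F.toLin')
      (W := W.toLin') (Pi.single j 1)) k
    rwa [← toLin'_pow, toLin'_apply, toLin'_apply] at this
  have hqx := LinearMap.eq_of_mem_reachableIn hdec hx
  have hqFx := LinearMap.eq_of_mem_reachableIn hdec (LinearMap.apply_mem_reachableIn_succ hx)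
  have hHx := hq x 0
  rw [toLin'_apply] at hqFx
  rw [mulVec_zero, mulVec_zero, add_zero, add_zero, hqx, hqFx, add_eq_left,
    dotProduct_self_eq_zero] at hHx
  rw [← mulVec_mulVec, ← mulVec_mulVec, zero_mulVec]
  exact hHx

theorem mul_eq_zero_of_ker_le [CommRing 𝕜] {ν : Type*} [Fintype μ] [Fintype ν] [DecidableEq ν]
    {R : Matrix μ μ 𝕜} {S : Matrix ι μ 𝕜} {G : Matrix μ ν 𝕜} (hker : ∀ v, R *ᵥ v = 0 → S *ᵥ v = 0)
    (hRG : R * G = 0) : S * G = 0 := by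
  refine ext_of_mulVec_single fun j => ?_
  rw [← mulVec_mulVec, zero_mulVec]
  exact hker _ (by rw [mulVec_mulVec, hRG, zero_mulVec])

theorem mul_mul_transpose_eq_transpose [CommRing 𝕜] [Fintype μ] {R R' : Matrix μ μ 𝕜}
    {S : Matrix ι μ 𝕜} (hR : Rᵀ = R) (hR' : R * R' * R = R) (hS : S * R' * R = S) :
    R * (R' * Sᵀ) = Sᵀ := by
  have hSt : R * (R'ᵀ * Sᵀ) = Sᵀ := by
    simpa [transpose_mul, hR, Matrix.mul_assoc] using congrArg transpose hS
  calc R * (R' * Sᵀ) = R * R' * R * (R'ᵀ * Sᵀ) := by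
        rw [Matrix.mul_assoc _ R, hSt, Matrix.mul_assoc]
    _ = Sᵀ := by rw [hR', hSt]

section ClosedLoop

variable [CommRing 𝕜] [Fintype ι] [Fintype μ] [Fintype π] (A : Matrix ι ι 𝕜) (B : Matrix ι μ 𝕜)
  (C : Matrix π ι 𝕜) (D : Matrix π μ 𝕜) (X : Matrix ι ι 𝕜) (K : Matrix μ ι 𝕜)

theorem closedLoop_cross :
    (A - B * K)ᵀ * X * B + (C - D * K)ᵀ * D
      = Aᵀ * X * B + Cᵀ * D - Kᵀ * (Dᵀ * D + Bᵀ * X * B) := by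
  simp only [transpose_sub, transpose_mul, Matrix.sub_mul, Matrix.mul_add, Matrix.mul_assoc]
  abel

theorem closedLoop_gram :
    (A - B * K)ᵀ * X * (A - B * K) + (C - D * K)ᵀ * (C - D * K)
      = Aᵀ * X * A + Cᵀ * C - (Aᵀ * X * B + Cᵀ * D) * K
        - Kᵀ * (Bᵀ * X * A + Dᵀ * C - (Dᵀ * D + Bᵀ * X * B) * K) := by
  simp only [transpose_sub, transpose_mul, Matrix.sub_mul, Matrix.mul_sub, Matrix.add_mul,
    Matrix.mul_add, Matrix.mul_assoc]
  abel

end ClosedLoop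

end Matrix

theorem stmt_11_general (n m p : ℕ)
    (A : Matrix (Fin n) (Fin n) ℝ) (B : Matrix (Fin n) (Fin m) ℝ)
    (C : Matrix (Fin p) (Fin n) ℝ) (D : Matrix (Fin p) (Fin m) ℝ)
    (X : Matrix (Fin n) (Fin n) ℝ) (hX : Xᵀ = X)
    (RXd : Matrix (Fin m) (Fin m) ℝ)
    (pen1 : (Dᵀ * D + Bᵀ * X * B) * RXd * (Dᵀ * D + Bᵀ * X * B) = Dᵀ * D + Bᵀ * X * B)
    (hGDARE : X = Aᵀ * X * A
        - (Aᵀ * X * B + Cᵀ * D) * RXd * (Aᵀ * X * B + Cᵀ * D)ᵀ + Cᵀ * C)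
    (hker : ∀ v : Fin m → ℝ, (Dᵀ * D + Bᵀ * X * B).mulVec v = 0 →
        (Aᵀ * X * B + Cᵀ * D).mulVec v = 0) :
    ∀ k : ℕ,
      (C - D * (RXd * (Aᵀ * X * B + Cᵀ * D)ᵀ))
        * (A - B * (RXd * (Aᵀ * X * B + Cᵀ * D)ᵀ)) ^ k
        * (B * (1 - RXd * (Dᵀ * D + Bᵀ * X * B))) = 0 := by
  set R := Dᵀ * D + Bᵀ * X * B
  set S := Aᵀ * X * B + Cᵀ * D
  set K := RXd * Sᵀ
  set G := 1 - RXd * R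
  have hRt : Rᵀ = R := by simp [R, transpose_mul, hX, Matrix.mul_assoc]
  have hSt : Sᵀ = Bᵀ * X * A + Dᵀ * C := by simp [S, transpose_mul, hX, Matrix.mul_assoc]
  have hRG : R * G = 0 := by
    rw [Matrix.mul_sub, Matrix.mul_one, ← Matrix.mul_assoc, pen1, sub_self]
  have hSG : S * G = 0 := mul_eq_zero_of_ker_le hker hRG
  have hRK : R * K = Sᵀ := by
    refine mul_mul_transpose_eq_transpose hRt pen1 ?_
    rwa [Matrix.mul_sub, Matrix.mul_one, sub_eq_zero, eq_comm, ← Matrix.mul_assoc] at hSG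
  have hF : (A - B * K)ᵀ * X * (A - B * K) + (C - D * K)ᵀ * (C - D * K) = X := by
    rw [closedLoop_gram, ← hSt, hRK, sub_self, Matrix.mul_zero, sub_zero]
    conv_rhs => rw [hGDARE]
    rw [Matrix.mul_assoc S]
    abel
  have hFW : (A - B * K)ᵀ * X * (B * G) + (C - D * K)ᵀ * (D * G) = 0 := by
    calc _ = ((A - B * K)ᵀ * X * B + (C - D * K)ᵀ * D) * G := by
          simp only [Matrix.add_mul, Matrix.mul_assoc]
      _ = 0 := by
          rw [closedLoop_cross, Matrix.sub_mul, hSG, Matrix.mul_assoc, hRG, Matrix.mul_zero,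
            sub_zero]
  have hW : (B * G)ᵀ * X * (B * G) + (D * G)ᵀ * (D * G) = 0 := by
    rw [show (B * G)ᵀ * X * (B * G) + (D * G)ᵀ * (D * G) = Gᵀ * (R * G) by
      simp only [R, transpose_mul, Matrix.mul_add, Matrix.add_mul, Matrix.mul_assoc]; abel,
      hRG, Matrix.mul_zero]
  exact mul_pow_mul_eq_zero_of_dissipation (q := fun x => x ⬝ᵥ X *ᵥ x)
    (dissipation_eq_of_closedLoop hX hF hFW hW)

theorem stmt_11 (n m p : ℕ)
    (A : Matrix (Fin n) (Fin n) ℝ) (B : Matrix (Fin n) (Fin m) ℝ)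
    (C : Matrix (Fin p) (Fin n) ℝ) (D : Matrix (Fin p) (Fin m) ℝ)
    (X : Matrix (Fin n) (Fin n) ℝ) (hX : Xᵀ = X)
    (RXd : Matrix (Fin m) (Fin m) ℝ)
    (pen1 : (Dᵀ * D + Bᵀ * X * B) * RXd * (Dᵀ * D + Bᵀ * X * B) = Dᵀ * D + Bᵀ * X * B)
    (pen2 : RXd * (Dᵀ * D + Bᵀ * X * B) * RXd = RXd)
    (pen3 : ((Dᵀ * D + Bᵀ * X * B) * RXd)ᵀ = (Dᵀ * D + Bᵀ * X * B) * RXd)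
    (pen4 : (RXd * (Dᵀ * D + Bᵀ * X * B))ᵀ = RXd * (Dᵀ * D + Bᵀ * X * B))
    (hGDARE : X = Aᵀ * X * A
        - (Aᵀ * X * B + Cᵀ * D) * RXd * (Aᵀ * X * B + Cᵀ * D)ᵀ + Cᵀ * C)
    (hker : ∀ v : Fin m → ℝ, (Dᵀ * D + Bᵀ * X * B).mulVec v = 0 →
        (Aᵀ * X * B + Cᵀ * D).mulVec v = 0) :
    ∀ k : ℕ,
      (C - D * (RXd * (Aᵀ * X * B + Cᵀ * D)ᵀ))
        * (A - B * (RXd * (Aᵀ * X * B + Cᵀ * D)ᵀ)) ^ k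
        * (B * (1 - RXd * (Dᵀ * D + Bᵀ * X * B))) = 0 :=
  stmt_11_general n m p A B C D X hX RXd pen1 hGDARE hker
end

section
/- Assume the Popov matrix Π = [[Q, S],[Sᵀ, R]] is positive semidefinite. If X is a symmetric solution of CGDARE(Σ), then ker R_X ⊆ ker (X B); that is, every v ∈ ℝ^m with R_X v = 0 satisfies X B v = 0 (equivalently, X B G_X = 0). -/
/-!
Write `V x = xᵀ X x`. Completing the square in the Riccati equation, which is possible because of
the kernel condition, gives `V (A z + B u) + π (z, u) = V z + qᵀ R_X† q` with `q = S_Xᵀ z + R_X u`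
and `π ≥ 0` the Popov form. For `R_X v = 0` the input `u = α v - R_X† S_Xᵀ z` makes `q = 0`, so
`V` does not increase along `z ↦ A_X z + α B v`, where `A_X = A - B R_X† S_Xᵀ`. Iterating,
`V (A_X ^ k z + y) ≤ V z` for every `y` in the Krylov space of `A_X` at `B v`, which by
Cayley–Hamilton contains `A_X ^ n B v`. Hence `V (ε A_X ^ n ξ) ≤ V (ε ξ + B v)`, and as
`V (B v) ≤ 0` the quadratic `ε ↦ ε² (V ξ - V (A_X ^ n ξ)) + 2 ε ξᵀ X B v` is nonnegative, which
forces `ξᵀ X B v = 0` for all `ξ`.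
-/

open Matrix

namespace Matrix

variable {K : Type*} [CommRing K] {m n : Type*} [Fintype m] [Fintype n]

structure IsMoorePenroseInverse_s12 (M : Matrix m n K) (Y : Matrix n m K) : Prop where
  mul_mul_self : M * Y * M = M
  self_mul_mul : Y * M * Y = Y
  transpose_mul_self : (M * Y)ᵀ = M * Y
  transpose_self_mul : (Y * M)ᵀ = Y * M

namespace IsMoorePenroseInverse_s12

variable {M : Matrix m n K} {Y Z : Matrix n m K}

theorem unique (hY : IsMoorePenroseInverse_s12 M Y) (hZ : IsMoorePenroseInverse_s12 M Z) : Y = Z := by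
  have hMY : M * Y = M * Z := by
    calc M * Y = (M * Z * M * Y)ᵀ := by rw [hZ.mul_mul_self, hY.transpose_mul_self]
      _ = (M * Y)ᵀ * (M * Z)ᵀ := by simp only [transpose_mul, Matrix.mul_assoc]
      _ = M * Z := by rw [hY.transpose_mul_self, hZ.transpose_mul_self, ← Matrix.mul_assoc,
            hY.mul_mul_self]
  have hYM : Y * M = Z * M := by
    calc Y * M = (Y * (M * Z * M))ᵀ := by rw [hZ.mul_mul_self, hY.transpose_self_mul]
      _ = (Z * M)ᵀ * (Y * M)ᵀ := by simp only [transpose_mul, Matrix.mul_assoc]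
      _ = Z * M := by rw [hY.transpose_self_mul, hZ.transpose_self_mul, Matrix.mul_assoc,
            ← Matrix.mul_assoc M, hY.mul_mul_self]
  calc Y = Y * M * Y := hY.self_mul_mul.symm
    _ = Z * M * Z := by rw [Matrix.mul_assoc, hMY, ← Matrix.mul_assoc, hYM]
    _ = Z := hZ.self_mul_mul

theorem transpose (hY : IsMoorePenroseInverse_s12 M Y) : IsMoorePenroseInverse_s12 Mᵀ Yᵀ where
  mul_mul_self := by
    simpa only [transpose_mul, Matrix.mul_assoc] using congrArg Matrix.transpose hY.mul_mul_self
  self_mul_mul := by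
    simpa only [transpose_mul, Matrix.mul_assoc] using congrArg Matrix.transpose hY.self_mul_mul
  transpose_mul_self := by rw [← transpose_mul, transpose_transpose, hY.transpose_self_mul]
  transpose_self_mul := by rw [← transpose_mul, transpose_transpose, hY.transpose_mul_self]

theorem transpose_eq_self {M Y : Matrix n n K} (hY : IsMoorePenroseInverse_s12 M Y) (hM : Mᵀ = M) :
    Yᵀ = Y :=
  (hM ▸ hY.transpose).unique hY

end IsMoorePenroseInverse_s12

theorem mul_mul_eq_of_ker_le {l : Type*} {M : Matrix m n K} {Y : Matrix n m K}
    {N : Matrix l n K} (hY : M * Y * M = M) (hker : ∀ v, M *ᵥ v = 0 → N *ᵥ v = 0) :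
    N * Y * M = N := by
  refine ext_iff_mulVec.2 fun v => ?_
  have hv : M *ᵥ (v - (Y * M) *ᵥ v) = 0 := by
    rw [mulVec_sub, mulVec_mulVec, ← Matrix.mul_assoc, hY, sub_self]
  rw [← sub_eq_zero, Matrix.mul_assoc, ← mulVec_mulVec, ← neg_sub, ← mulVec_sub, hker _ hv,
    neg_zero]

theorem pow_card_add_sum_charpoly_coeff_smul_pow [Nontrivial K] {ι : Type*} [Fintype ι]
    [DecidableEq ι] (F : Matrix ι ι K) :
    F ^ Fintype.card ι + ∑ j ∈ Finset.range (Fintype.card ι), F.charpoly.coeff j • F ^ j = 0 := by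
  have hlead : F.charpoly.coeff (Fintype.card ι) = 1 := by
    simpa using F.charpoly_monic.coeff_natDegree
  have := F.aeval_self_charpoly
  rwa [Polynomial.aeval_eq_sum_range, charpoly_natDegree_eq_dim, Finset.sum_range_succ, hlead,
    one_smul, add_comm] at this

section Descent

variable {ι : Type*} [Fintype ι] [DecidableEq ι] {X F : Matrix ι ι ℝ} {w : ι → ℝ}

theorem dotProduct_mulVec_pow_add_sum_le
    (h : ∀ z (α : ℝ), (F *ᵥ z + α • w) ⬝ᵥ X *ᵥ (F *ᵥ z + α • w) ≤ z ⬝ᵥ X *ᵥ z)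
    (N : ℕ) (c : ℕ → ℝ) (z : ι → ℝ) :
    (F ^ N *ᵥ z + ∑ j ∈ Finset.range N, c j • F ^ j *ᵥ w) ⬝ᵥ
        X *ᵥ (F ^ N *ᵥ z + ∑ j ∈ Finset.range N, c j • F ^ j *ᵥ w) ≤ z ⬝ᵥ X *ᵥ z := by
  induction N generalizing c z with
  | zero => simp
  | succ N ih =>
    have hshift : F ^ (N + 1) *ᵥ z + ∑ j ∈ Finset.range (N + 1), c j • F ^ j *ᵥ w =
        F *ᵥ (F ^ N *ᵥ z + ∑ j ∈ Finset.range N, c (j + 1) • F ^ j *ᵥ w) + c 0 • w := by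
      simp only [Finset.sum_range_succ', mulVec_add, mulVec_sum, mulVec_smul, mulVec_mulVec,
        ← pow_succ', pow_zero, one_mulVec, add_assoc]
    rw [hshift]
    exact (h _ _).trans (ih _ _)

theorem mulVec_eq_zero_of_forall_dotProduct_mulVec_le (hX : Xᵀ = X)
    (h : ∀ z (α : ℝ), (F *ᵥ z + α • w) ⬝ᵥ X *ᵥ (F *ᵥ z + α • w) ≤ z ⬝ᵥ X *ᵥ z) :
    X *ᵥ w = 0 := by
  set d := Fintype.card ι
  have hw : w ⬝ᵥ X *ᵥ w ≤ 0 := by simpa using h 0 1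
  have hsymm : ∀ ξ, w ⬝ᵥ X *ᵥ ξ = ξ ⬝ᵥ X *ᵥ w := fun ξ => by
    rw [dotProduct_mulVec, ← mulVec_transpose, hX, dotProduct_comm]
  -- Cayley–Hamilton lets the Krylov part of the trajectory cancel `F ^ d *ᵥ w`.
  have hkrylov : F ^ d *ᵥ w + ∑ j ∈ Finset.range d, F.charpoly.coeff j • F ^ j *ᵥ w = 0 := by
    simpa only [add_mulVec, sum_mulVec, smul_mulVec, zero_mulVec] using
      congrArg (· *ᵥ w) F.pow_card_add_sum_charpoly_coeff_smul_pow
  have hquad : ∀ ε : ℝ, 0 ≤ (X *ᵥ w ⬝ᵥ X *ᵥ X *ᵥ w - (F ^ d *ᵥ X *ᵥ w) ⬝ᵥ X *ᵥ F ^ d *ᵥ X *ᵥ w)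
      * (ε * ε) + 2 * (X *ᵥ w ⬝ᵥ X *ᵥ w) * ε + 0 := by
    intro ε
    have hle := dotProduct_mulVec_pow_add_sum_le h d (F.charpoly.coeff ·) (ε • X *ᵥ w + w)
    rw [mulVec_add, add_assoc, hkrylov, add_zero] at hle
    simp only [mulVec_add, mulVec_smul, dotProduct_add, add_dotProduct, dotProduct_smul,
      smul_dotProduct, smul_eq_mul, hsymm] at hle
    nlinarith
  have hdiscrim := discrim_le_zero hquad
  rw [discrim, mul_zero, sub_zero] at hdiscrim
  have : X *ᵥ w ⬝ᵥ X *ᵥ w = 0 := by nlinarith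
  exact dotProduct_self_eq_zero.1 this

end Descent

theorem dotProduct_transpose_mul_mul_mulVec {ι κ : Type*} [Fintype ι] [Fintype κ]
    (M : Matrix ι κ K) (X : Matrix ι ι K) (p : κ → K) :
    p ⬝ᵥ (Mᵀ * X * M) *ᵥ p = (M *ᵥ p) ⬝ᵥ X *ᵥ M *ᵥ p := by
  rw [← mulVec_mulVec, ← mulVec_mulVec, dotProduct_mulVec, vecMul_transpose]

section Riccati

variable {ι κ : Type*} [Fintype ι]
  {A X Q : Matrix ι ι ℝ} {B S : Matrix ι κ ℝ} {R Y : Matrix κ κ ℝ}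

def riccatiR (R : Matrix κ κ ℝ) (B : Matrix ι κ ℝ) (X : Matrix ι ι ℝ) : Matrix κ κ ℝ :=
  R + Bᵀ * X * B

def riccatiS (A : Matrix ι ι ℝ) (B S : Matrix ι κ ℝ) (X : Matrix ι ι ℝ) : Matrix ι κ ℝ :=
  Aᵀ * X * B + S

theorem riccatiR_transpose (hR : Rᵀ = R) (hX : Xᵀ = X) :
    (riccatiR R B X)ᵀ = riccatiR R B X := by
  simp only [riccatiR, transpose_add, transpose_mul, transpose_transpose, hR, hX, Matrix.mul_assoc]

theorem riccatiS_transpose (hX : Xᵀ = X) :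
    (riccatiS A B S X)ᵀ = Bᵀ * X * A + Sᵀ := by
  simp only [riccatiS, transpose_add, transpose_mul, transpose_transpose, hX, Matrix.mul_assoc]

variable [Fintype κ]

theorem riccatiR_mul_mul_riccatiS_transpose (hR : Rᵀ = R) (hX : Xᵀ = X)
    (hY : IsMoorePenroseInverse_s12 (riccatiR R B X) Y)
    (hker : riccatiS A B S X * Y * riccatiR R B X = riccatiS A B S X) :
    riccatiR R B X * Y * (riccatiS A B S X)ᵀ = (riccatiS A B S X)ᵀ := by
  simpa only [transpose_mul, hY.transpose_eq_self (riccatiR_transpose hR hX),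
    riccatiR_transpose hR hX, Matrix.mul_assoc] using congrArg Matrix.transpose hker

theorem fromCols_transpose_mul_mul_fromCols_add_fromBlocks (hR : Rᵀ = R) (hX : Xᵀ = X)
    (hY : IsMoorePenroseInverse_s12 (riccatiR R B X) Y)
    (hGDARE : X = Aᵀ * X * A - riccatiS A B S X * Y * (riccatiS A B S X)ᵀ + Q)
    (hker : riccatiS A B S X * Y * riccatiR R B X = riccatiS A B S X) :
    (fromCols A B)ᵀ * X * fromCols A B + fromBlocks Q S Sᵀ R =
      fromBlocks X 0 0 0 + (fromCols (riccatiS A B S X)ᵀ (riccatiR R B X))ᵀ * Y *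
        fromCols (riccatiS A B S X)ᵀ (riccatiR R B X) := by
  simp only [transpose_fromCols, transpose_transpose, riccatiR_transpose hR hX]
  rw [fromRows_mul Aᵀ Bᵀ, fromRows_mul (riccatiS A B S X), fromRows_mul_fromCols,
    fromRows_mul_fromCols, fromBlocks_add, fromBlocks_add]
  simp only [zero_add]
  congr 1
  · calc Aᵀ * X * A + Q = (Aᵀ * X * A - riccatiS A B S X * Y * (riccatiS A B S X)ᵀ + Q) +
          riccatiS A B S X * Y * (riccatiS A B S X)ᵀ := by abel
      _ = _ := by rw [← hGDARE]
  · exact hker.symm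
  · rw [riccatiR_mul_mul_riccatiS_transpose hR hX hY hker, riccatiS_transpose hX]
  · rw [hY.mul_mul_self, riccatiR, add_comm]

def riccatiClosedLoop (A : Matrix ι ι ℝ) (B S : Matrix ι κ ℝ) (X : Matrix ι ι ℝ)
    (Y : Matrix κ κ ℝ) : Matrix ι ι ℝ :=
  A - B * Y * (riccatiS A B S X)ᵀ

theorem dotProduct_riccatiClosedLoop_mulVec_add_le (hR : Rᵀ = R) (hX : Xᵀ = X)
    (hY : IsMoorePenroseInverse_s12 (riccatiR R B X) Y)
    (hGDARE : X = Aᵀ * X * A - riccatiS A B S X * Y * (riccatiS A B S X)ᵀ + Q)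
    (hker : riccatiS A B S X * Y * riccatiR R B X = riccatiS A B S X)
    (hPi : (fromBlocks Q S Sᵀ R).PosSemidef) {v : κ → ℝ} (hv : riccatiR R B X *ᵥ v = 0)
    (z : ι → ℝ) (α : ℝ) :
    (riccatiClosedLoop A B S X Y *ᵥ z + α • B *ᵥ v) ⬝ᵥ
        X *ᵥ (riccatiClosedLoop A B S X Y *ᵥ z + α • B *ᵥ v) ≤ z ⬝ᵥ X *ᵥ z := by
  -- this input makes the completed square vanish
  set p := Sum.elim z (α • v - Y *ᵥ (riccatiS A B S X)ᵀ *ᵥ z)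
  have hstate : fromCols A B *ᵥ p = riccatiClosedLoop A B S X Y *ᵥ z + α • B *ᵥ v := by
    simp only [p, fromCols_mulVec_sumElim, riccatiClosedLoop, mulVec_sub, sub_mulVec, mulVec_smul,
      mulVec_mulVec, Matrix.mul_assoc]
    abel
  have hgain : fromCols (riccatiS A B S X)ᵀ (riccatiR R B X) *ᵥ p = 0 := by
    rw [fromCols_mulVec_sumElim, mulVec_sub, mulVec_smul, hv, smul_zero, zero_sub, mulVec_mulVec,
      mulVec_mulVec, riccatiR_mul_mul_riccatiS_transpose hR hX hY hker,
      add_neg_cancel]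
  have hPi_p : 0 ≤ p ⬝ᵥ fromBlocks Q S Sᵀ R *ᵥ p := hPi.dotProduct_mulVec_nonneg p
  have hsplit := congrArg (fun M => p ⬝ᵥ M *ᵥ p)
    (fromCols_transpose_mul_mul_fromCols_add_fromBlocks hR hX hY hGDARE hker)
  have hfree : p ⬝ᵥ fromBlocks X 0 0 0 *ᵥ p = z ⬝ᵥ X *ᵥ z := by simp [p, fromBlocks_mulVec]
  simp only [add_mulVec, dotProduct_add, dotProduct_transpose_mul_mul_mulVec, hstate, hgain,
    mulVec_zero, dotProduct_zero, add_zero, hfree] at hsplit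
  linarith

end Riccati

end Matrix

theorem stmt_12_general (n m : ℕ)
    (A : Matrix (Fin n) (Fin n) ℝ) (B : Matrix (Fin n) (Fin m) ℝ)
    (Q : Matrix (Fin n) (Fin n) ℝ) (S : Matrix (Fin n) (Fin m) ℝ)
    (R : Matrix (Fin m) (Fin m) ℝ)
    (hR : Rᵀ = R)
    (hPi : (Matrix.fromBlocks Q S Sᵀ R).PosSemidef)
    (X : Matrix (Fin n) (Fin n) ℝ) (hX : Xᵀ = X)
    (RXd : Matrix (Fin m) (Fin m) ℝ)
    (pen1 : (R + Bᵀ * X * B) * RXd * (R + Bᵀ * X * B) = R + Bᵀ * X * B)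
    (pen2 : RXd * (R + Bᵀ * X * B) * RXd = RXd)
    (pen3 : ((R + Bᵀ * X * B) * RXd)ᵀ = (R + Bᵀ * X * B) * RXd)
    (pen4 : (RXd * (R + Bᵀ * X * B))ᵀ = RXd * (R + Bᵀ * X * B))
    (hGDARE : X = Aᵀ * X * A - (Aᵀ * X * B + S) * RXd * (Aᵀ * X * B + S)ᵀ + Q)
    (hker : ∀ v : Fin m → ℝ, (R + Bᵀ * X * B).mulVec v = 0 → (Aᵀ * X * B + S).mulVec v = 0) :
    (∀ v : Fin m → ℝ, (R + Bᵀ * X * B).mulVec v = 0 → (X * B).mulVec v = 0)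
    ∧ X * B * (1 - RXd * (R + Bᵀ * X * B)) = 0 := by
  have hY : IsMoorePenroseInverse_s12 (riccatiR R B X) RXd := ⟨pen1, pen2, pen3, pen4⟩
  have hSX : riccatiS A B S X * RXd * riccatiR R B X = riccatiS A B S X :=
    mul_mul_eq_of_ker_le pen1 hker
  have hXB : ∀ v : Fin m → ℝ, (R + Bᵀ * X * B) *ᵥ v = 0 → (X * B) *ᵥ v = 0 := fun v hv => by
    rw [← mulVec_mulVec]
    exact mulVec_eq_zero_of_forall_dotProduct_mulVec_le hX
      (dotProduct_riccatiClosedLoop_mulVec_add_le hR hX hY hGDARE hSX hPi hv)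
  refine ⟨hXB, ?_⟩
  rw [Matrix.mul_sub, Matrix.mul_one, ← Matrix.mul_assoc, mul_mul_eq_of_ker_le pen1 hXB, sub_self]

theorem stmt_12 (n m : ℕ)
    (A : Matrix (Fin n) (Fin n) ℝ) (B : Matrix (Fin n) (Fin m) ℝ)
    (Q : Matrix (Fin n) (Fin n) ℝ) (S : Matrix (Fin n) (Fin m) ℝ)
    (R : Matrix (Fin m) (Fin m) ℝ)
    (hQ : Qᵀ = Q) (hR : Rᵀ = R)
    (hPi : (Matrix.fromBlocks Q S Sᵀ R).PosSemidef)
    (X : Matrix (Fin n) (Fin n) ℝ) (hX : Xᵀ = X)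
    (RXd : Matrix (Fin m) (Fin m) ℝ)
    (pen1 : (R + Bᵀ * X * B) * RXd * (R + Bᵀ * X * B) = R + Bᵀ * X * B)
    (pen2 : RXd * (R + Bᵀ * X * B) * RXd = RXd)
    (pen3 : ((R + Bᵀ * X * B) * RXd)ᵀ = (R + Bᵀ * X * B) * RXd)
    (pen4 : (RXd * (R + Bᵀ * X * B))ᵀ = RXd * (R + Bᵀ * X * B))
    (hGDARE : X = Aᵀ * X * A - (Aᵀ * X * B + S) * RXd * (Aᵀ * X * B + S)ᵀ + Q)
    (hker : ∀ v : Fin m → ℝ, (R + Bᵀ * X * B).mulVec v = 0 → (Aᵀ * X * B + S).mulVec v = 0) :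
    (∀ v : Fin m → ℝ, (R + Bᵀ * X * B).mulVec v = 0 → (X * B).mulVec v = 0)
    ∧ X * B * (1 - RXd * (R + Bᵀ * X * B)) = 0 :=
  stmt_12_general n m A B Q S R hR hPi X hX RXd pen1 pen2 pen3 pen4 hGDARE hker
end

section
/- Assume the Popov matrix Π = [[Q, S],[Sᵀ, R]] is positive semidefinite. If X₁ and X₂ are two symmetric solutions of CGDARE(Σ), then ker R_{X₁} = ker R_{X₂}; that is, for every v ∈ ℝ^m, (R + BᵀX₁B) v = 0 if and only if (R + BᵀX₂B) v = 0. -/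
/-!
Write `R_X = R + BᵀXB` and `S_X = AᵀXB + S`. For a solution `X` of CGDARE the gain
`K = (R_X†)ᵀ S_Xᵀ` satisfies `S_X = Kᵀ R_X`, and the Riccati equation becomes the identity
`Π = [I 0]ᵀ X [I 0] - [A B]ᵀ X [A B] + [K I]ᵀ R_X [K I]`.
Evaluate the quadratic form of `Π` at complex vectors `(x, u)` with `x = s (A x + B u)` and
`|s| = 1`: the two `X`-terms cancel and what remains is `(K x + u)ᴴ R_X (K x + u)`. For all
but finitely many `s` on the unit circle, `x` can be chosen for any prescribed `K x + u = w`,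
so `Π ≥ 0` forces `R_X ≥ 0`. If moreover `R_{X₁} v = 0`, taking `w = v` for the gain `K₁`
makes the form vanish, so `R_{X₂} (K₂ x + u) = 0`, i.e. `R_{X₂} v = R_{X₂} (K₁ - K₂) x(s)`.
The right-hand side is a rational function of `s` vanishing at `s = 0`, while the left-hand
side is constant; hence `R_{X₂} v = 0`.
-/

open Matrix Polynomial
open scoped ComplexOrder

namespace Matrix

variable {ι κ : Type*}

section Resolvent

variable {K : Type*} [Field K]

lemma map_eval_one_sub_X_smul [DecidableEq ι] (M : Matrix ι ι K) (s : K) :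
    (1 - (X : K[X]) • M.map C).map (eval s) = 1 - s • M := by
  ext i j
  by_cases h : i = j <;> simp [h] <;> ring

lemma eval_charpolyRev_eq_det [Fintype ι] [DecidableEq ι] (M : Matrix ι ι K) (s : K) :
    M.charpolyRev.eval s = (1 - s • M).det := by
  rw [charpolyRev, ← coe_evalRingHom, RingHom.map_det, RingHom.mapMatrix_apply, coe_evalRingHom,
    map_eval_one_sub_X_smul]

lemma eval_map_C_mulVec_mulVec [Fintype ι] (N : Matrix κ ι K) (P : Matrix ι ι K[X])
    (w : ι → K) (s : K) (j : κ) :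
    ((N.map C *ᵥ (P *ᵥ fun i => C (w i))) j).eval s = (N *ᵥ (P.map (eval s) *ᵥ w)) j := by
  rw [← coe_evalRingHom, RingHom.map_mulVec]
  congr 1
  · ext; simp
  · funext i
    rw [Function.comp_apply, RingHom.map_mulVec]
    congr 1
    funext; simp

/-- Clearing denominators, `det (1 - s M) • c - s • N adj (1 - s M) w` is a polynomial in `s`
with infinitely many roots; its value at `0` is `c`. -/
theorem eq_zero_of_infinite_of_one_sub_smul_mulVec [Fintype ι] [DecidableEq ι]
    (M : Matrix ι ι K) (N : Matrix κ ι K) (w : ι → K) (c : κ → K) {T : Set K} (hT : T.Infinite)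
    (h : ∀ s ∈ T, ∃ x, (1 - s • M) *ᵥ x = s • w ∧ N *ᵥ x = c) : c = 0 := by
  funext j
  set p : K[X] := C (c j) * M.charpolyRev -
    X * (N.map C *ᵥ (adjugate (1 - (X : K[X]) • M.map C) *ᵥ fun i => C (w i))) j
  have hp : p = 0 := by
    refine eq_zero_of_infinite_isRoot p (hT.mono fun s hs => ?_)
    obtain ⟨x, hx, rfl⟩ := h s hs
    have hdet : (1 - s • M).det • x = s • adjugate (1 - s • M) *ᵥ w := by
      rw [← mulVec_smul, ← hx, mulVec_mulVec, adjugate_mul, smul_mulVec, one_mulVec]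
    have hdetj := congrArg (fun y => (N *ᵥ y) j) hdet
    simp only [mulVec_smul, Pi.smul_apply, smul_eq_mul] at hdetj
    simp only [Set.mem_ofPred_eq, IsRoot, p, eval_sub, eval_mul, eval_C, eval_X,
      eval_charpolyRev_eq_det, eval_map_C_mulVec_mulVec]
    rw [← coe_evalRingHom, ← RingHom.mapMatrix_apply, RingHom.map_adjugate,
      RingHom.mapMatrix_apply, coe_evalRingHom, map_eval_one_sub_X_smul]
    linear_combination hdetj
  simpa [p] using congrArg (eval 0) hp

end Resolvent

section Popov

variable {R : Type*} [CommRing R]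

lemma eq_smul_of_one_sub_smul_mulVec [Fintype ι] [Fintype κ] [DecidableEq ι] {A : Matrix ι ι R}
    {B : Matrix ι κ R} {K : Matrix κ ι R} {s : R} {x : ι → R} {w : κ → R}
    (hx : (1 - s • (A - B * K)) *ᵥ x = s • (B *ᵥ w)) :
    x = s • (A *ᵥ x + B *ᵥ (w - K *ᵥ x)) := by
  rw [sub_mulVec, one_mulVec, sub_eq_iff_eq_add] at hx
  conv_lhs => rw [hx]
  simp only [smul_mulVec, sub_mulVec, ← mulVec_mulVec, mulVec_sub]
  module

variable [StarRing R]

/-- With `K` the gain of a CGDARE solution `X` and `RX = R + BᵀXB`, this is the Popov matrix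
`[[Q, S], [Sᵀ, R]]` (see `fromBlocks_eq_popovMatrix`). -/
def popovMatrix [Fintype ι] [Fintype κ] [DecidableEq ι] [DecidableEq κ] (A : Matrix ι ι R)
    (B : Matrix ι κ R) (X : Matrix ι ι R) (K : Matrix κ ι R) (RX : Matrix κ κ R) :
    Matrix (ι ⊕ κ) (ι ⊕ κ) R :=
  (fromCols 1 0 : Matrix ι (ι ⊕ κ) R)ᴴ * X * (fromCols 1 0 : Matrix ι (ι ⊕ κ) R) -
    (fromCols A B)ᴴ * X * fromCols A B + (fromCols K 1)ᴴ * RX * fromCols K 1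

lemma conjTranspose_fromCols_mul_mul_fromCols {ν : Type*} [Fintype ν] (E₁ : Matrix ν ι R)
    (E₂ : Matrix ν κ R) (M : Matrix ν ν R) :
    (fromCols E₁ E₂)ᴴ * M * fromCols E₁ E₂ =
      fromBlocks (E₁ᴴ * M * E₁) (E₁ᴴ * M * E₂) (E₂ᴴ * M * E₁) (E₂ᴴ * M * E₂) := by
  rw [conjTranspose_fromCols_eq_fromRows_conjTranspose, fromRows_mul, fromRows_mul_fromCols]

lemma star_dotProduct_conjTranspose_mul_mul_mulVec {ν : Type*} [Fintype ι] [Fintype ν]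
    (E : Matrix ι ν R) (X : Matrix ι ι R) (ξ : ν → R) :
    star ξ ⬝ᵥ ((Eᴴ * X * E) *ᵥ ξ) = star (E *ᵥ ξ) ⬝ᵥ (X *ᵥ (E *ᵥ ξ)) := by
  rw [← mulVec_mulVec, ← mulVec_mulVec, dotProduct_mulVec, star_mulVec]

variable [Fintype ι] [Fintype κ] [DecidableEq ι] [DecidableEq κ]

lemma popovMatrix_eq_fromBlocks (A : Matrix ι ι R) (B : Matrix ι κ R) (X : Matrix ι ι R)
    (K : Matrix κ ι R) (RX : Matrix κ κ R) :
    popovMatrix A B X K RX =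
      fromBlocks (X - Aᴴ * X * A + Kᴴ * RX * K) (Kᴴ * RX - Aᴴ * X * B)
        (RX * K - Bᴴ * X * A) (RX - Bᴴ * X * B) := by
  simp only [popovMatrix, conjTranspose_fromCols_mul_mul_fromCols, sub_eq_add_neg, fromBlocks_neg,
    fromBlocks_add, conjTranspose_one, conjTranspose_zero, Matrix.one_mul, Matrix.mul_one,
    Matrix.zero_mul, Matrix.mul_zero]
  congr 1 <;> abel

lemma popovMatrix_map {S : Type*} [CommRing S] [StarRing S] (f : R →+* S)
    (hf : Function.Semiconj f star star) (A : Matrix ι ι R) (B : Matrix ι κ R)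
    (X : Matrix ι ι R) (K : Matrix κ ι R) (RX : Matrix κ κ R) :
    (popovMatrix A B X K RX).map f =
      popovMatrix (A.map f) (B.map f) (X.map f) (K.map f) (RX.map f) := by
  simp only [popovMatrix, Matrix.map_add f (map_add f), Matrix.map_sub f (map_sub f),
    Matrix.map_mul, conjTranspose_map _ hf, fromCols_map, Matrix.map_one f f.map_zero f.map_one,
    Matrix.map_zero f f.map_zero]

lemma star_dotProduct_popovMatrix_mulVec_of_eq_smul {A : Matrix ι ι R} {B : Matrix ι κ R}
    {X : Matrix ι ι R} {K : Matrix κ ι R} {RX : Matrix κ κ R} {s : R} (hs : star s * s = 1)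
    {x : ι → R} {u : κ → R} (hx : x = s • (A *ᵥ x + B *ᵥ u)) :
    star (Sum.elim x u) ⬝ᵥ (popovMatrix A B X K RX *ᵥ Sum.elim x u) =
      star (K *ᵥ x + u) ⬝ᵥ (RX *ᵥ (K *ᵥ x + u)) := by
  simp only [popovMatrix, add_mulVec, sub_mulVec, dotProduct_add, dotProduct_sub,
    star_dotProduct_conjTranspose_mul_mul_mulVec, fromCols_mulVec_sumElim, one_mulVec,
    zero_mulVec, add_zero]
  generalize A *ᵥ x + B *ᵥ u = y at hx ⊢
  subst hx
  rw [star_smul, mulVec_smul, smul_dotProduct, dotProduct_smul, smul_smul, hs, one_smul, sub_self,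
    zero_add]

end Popov

section Complex

lemma infinite_setOf_star_mul_self_eq_one : {s : ℂ | star s * s = 1}.Infinite := by
  have hpi : (1 : ℝ) - 0 < 2 * Real.pi := by linarith [Real.pi_gt_three]
  refine ((Set.Icc_infinite zero_lt_one).image
    (Circle.coe_injective.comp_injOn (Circle.exp_injOn_Icc hpi))).mono ?_
  rintro _ ⟨t, -, rfl⟩
  change star (Circle.exp t : ℂ) * Circle.exp t = 1
  rw [Complex.star_def, ← Complex.normSq_eq_conj_mul_self, Circle.normSq_coe, Complex.ofReal_one]

lemma map_ofReal_mulVec_eq_zero_iff [Fintype ι] (M : Matrix κ ι ℝ) (v : ι → ℝ) :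
    M.map Complex.ofRealHom *ᵥ (Complex.ofRealHom ∘ v) = 0 ↔ M *ᵥ v = 0 := by
  simp only [funext_iff, ← RingHom.map_mulVec, Pi.zero_apply, map_eq_zero]

variable [Fintype ι] [Fintype κ] [DecidableEq ι] [DecidableEq κ]

lemma infinite_setOf_isUnit_det_one_sub_smul (M : Matrix ι ι ℂ) :
    {s : ℂ | star s * s = 1 ∧ IsUnit (1 - s • M).det}.Infinite := by
  have hM : M.charpolyRev ≠ 0 := fun h => by simpa [h] using eval_charpolyRev (M := M)
  refine (infinite_setOf_star_mul_self_eq_one.sdiff (finite_setOfPred_isRoot hM)).mono ?_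
  rintro s ⟨hs, hroot⟩
  exact ⟨hs, isUnit_iff_ne_zero.2 (by rwa [← eval_charpolyRev_eq_det])⟩

theorem PosSemidef.of_popovMatrix {A : Matrix ι ι ℂ} {B : Matrix ι κ ℂ} {X : Matrix ι ι ℂ}
    {K : Matrix κ ι ℂ} {RX : Matrix κ κ ℂ} (hP : (popovMatrix A B X K RX).PosSemidef)
    (hRX : RX.IsHermitian) : RX.PosSemidef := by
  refine .of_dotProduct_mulVec_nonneg hRX fun w => ?_
  obtain ⟨s, hs, hdet⟩ := (infinite_setOf_isUnit_det_one_sub_smul (A - B * K)).nonempty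
  obtain ⟨x, hx⟩ :=
    mulVec_surjective_iff_isUnit.2 ((isUnit_iff_isUnit_det _).2 hdet) (s • (B *ᵥ w))
  have h := hP.dotProduct_mulVec_nonneg (Sum.elim x (w - K *ᵥ x))
  rwa [star_dotProduct_popovMatrix_mulVec_of_eq_smul hs (eq_smul_of_one_sub_smul_mulVec hx),
    add_sub_cancel] at h

theorem mulVec_eq_zero_of_popovMatrix_eq {A : Matrix ι ι ℂ} {B : Matrix ι κ ℂ}
    {X₁ X₂ : Matrix ι ι ℂ} {K₁ K₂ : Matrix κ ι ℂ} {R₁ R₂ : Matrix κ κ ℂ}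
    (h : popovMatrix A B X₁ K₁ R₁ = popovMatrix A B X₂ K₂ R₂) (hR₂ : R₂.PosSemidef)
    {v : κ → ℂ} (hv : R₁ *ᵥ v = 0) : R₂ *ᵥ v = 0 := by
  refine eq_zero_of_infinite_of_one_sub_smul_mulVec (A - B * K₁) (R₂ * (K₁ - K₂)) (B *ᵥ v)
    _ (infinite_setOf_isUnit_det_one_sub_smul (A - B * K₁)) ?_
  rintro s ⟨hs, hdet⟩
  obtain ⟨x, hx⟩ :=
    mulVec_surjective_iff_isUnit.2 ((isUnit_iff_isUnit_det _).2 hdet) (s • (B *ᵥ v))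
  refine ⟨x, hx, ?_⟩
  have hx' := eq_smul_of_one_sub_smul_mulVec hx
  have h₁ :=
    star_dotProduct_popovMatrix_mulVec_of_eq_smul (X := X₁) (K := K₁) (RX := R₁) hs hx'
  have h₂ :=
    star_dotProduct_popovMatrix_mulVec_of_eq_smul (X := X₂) (K := K₂) (RX := R₂) hs hx'
  rw [add_sub_cancel, hv, dotProduct_zero, h] at h₁
  have hR₂v := (hR₂.dotProduct_mulVec_zero_iff _).1 (h₂.symm.trans h₁)
  rw [show K₂ *ᵥ x + (v - K₁ *ᵥ x) = v - (K₁ *ᵥ x - K₂ *ᵥ x) by abel, mulVec_sub,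
    sub_eq_zero] at hR₂v
  rw [← mulVec_mulVec, sub_mulVec, hR₂v]

theorem mulVec_eq_zero_iff_of_popovMatrix_eq {A : Matrix ι ι ℂ} {B : Matrix ι κ ℂ}
    {X₁ X₂ : Matrix ι ι ℂ} {K₁ K₂ : Matrix κ ι ℂ} {R₁ R₂ : Matrix κ κ ℂ}
    (hP : (popovMatrix A B X₁ K₁ R₁).PosSemidef)
    (h : popovMatrix A B X₁ K₁ R₁ = popovMatrix A B X₂ K₂ R₂) (hR₁ : R₁.IsHermitian)
    (hR₂ : R₂.IsHermitian) (v : κ → ℂ) : R₁ *ᵥ v = 0 ↔ R₂ *ᵥ v = 0 :=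
  ⟨mulVec_eq_zero_of_popovMatrix_eq h ((h ▸ hP).of_popovMatrix hR₂),
    mulVec_eq_zero_of_popovMatrix_eq h.symm (hP.of_popovMatrix hR₁)⟩

lemma PosSemidef.map_ofReal_s15 {M : Matrix ι ι ℝ} (hM : M.PosSemidef) :
    (M.map Complex.ofRealHom).PosSemidef := by
  open scoped MatrixOrder in
  obtain ⟨C, rfl⟩ := CStarAlgebra.nonneg_iff_eq_star_mul_self.mp hM.nonneg
  rw [star_eq_conjTranspose, Matrix.map_mul,
    conjTranspose_map (⇑Complex.ofRealHom) fun x => (Complex.conj_ofReal x).symm]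
  exact posSemidef_conjTranspose_mul_self _

end Complex

section CGDARE

lemma isSymm_add_transpose_mul_mul {𝕜 : Type*} [CommRing 𝕜] [Fintype ι] {R : Matrix κ κ 𝕜}
    {X : Matrix ι ι 𝕜} (hR : Rᵀ = R) (hX : Xᵀ = X) (B : Matrix ι κ 𝕜) :
    (R + Bᵀ * X * B).IsSymm := by
  simp only [IsSymm, transpose_add, transpose_mul, transpose_transpose, hR, hX, Matrix.mul_assoc]

lemma mul_mul_eq_of_mulVec_eq_zero {𝕜 : Type*} [CommRing 𝕜] [Fintype κ] {P P' : Matrix κ κ 𝕜}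
    {S : Matrix ι κ 𝕜} (hP : P * P' * P = P) (hker : ∀ v, P *ᵥ v = 0 → S *ᵥ v = 0) :
    S * P' * P = S := by
  refine ext_iff_mulVec.2 fun v => ?_
  have hv : P *ᵥ (v - (P' * P) *ᵥ v) = 0 := by
    rw [mulVec_sub, mulVec_mulVec, ← Matrix.mul_assoc, hP, sub_self]
  have := hker _ hv
  rwa [mulVec_sub, sub_eq_zero, mulVec_mulVec, ← Matrix.mul_assoc, eq_comm] at this

variable [Fintype ι] [Fintype κ] [DecidableEq ι] [DecidableEq κ]

theorem fromBlocks_eq_popovMatrix {𝕜 : Type*} [CommRing 𝕜] [StarRing 𝕜] [TrivialStar 𝕜]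
    {A Q X : Matrix ι ι 𝕜} {B S : Matrix ι κ 𝕜} {R RXd : Matrix κ κ 𝕜} (hR : Rᵀ = R)
    (hX : Xᵀ = X) (hpinv : (R + Bᵀ * X * B) * RXd * (R + Bᵀ * X * B) = R + Bᵀ * X * B)
    (hG : X = Aᵀ * X * A - (Aᵀ * X * B + S) * RXd * (Aᵀ * X * B + S)ᵀ + Q)
    (hker : ∀ v, (R + Bᵀ * X * B) *ᵥ v = 0 → (Aᵀ * X * B + S) *ᵥ v = 0) :
    fromBlocks Q S Sᵀ R = popovMatrix A B X (RXdᵀ * (Aᵀ * X * B + S)ᵀ) (R + Bᵀ * X * B) := by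
  have hRX := (isSymm_add_transpose_mul_mul hR hX B).eq
  set RX := R + Bᵀ * X * B
  set SX := Aᵀ * X * B + S with hSX
  have hSXRX : SX * RXd * RX = SX := mul_mul_eq_of_mulVec_eq_zero hpinv hker
  have hRXK : RX * (RXdᵀ * SXᵀ) = SXᵀ := by
    rw [← hRX, ← transpose_mul, ← transpose_mul, hSXRX]
  rw [popovMatrix_eq_fromBlocks, fromBlocks_inj]
  simp only [conjTranspose_eq_transpose_of_trivial, transpose_mul, transpose_transpose]
  refine ⟨?_, ?_, ?_, ?_⟩
  · rw [Matrix.mul_assoc _ RX, hRXK]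
    nth_rewrite 1 [hG]
    abel
  · rw [hSXRX, hSX]
    abel
  · rw [hRXK, hSX, transpose_add, transpose_mul, transpose_mul, hX, transpose_transpose,
      Matrix.mul_assoc]
    abel
  · exact (add_sub_cancel_right R _).symm

end CGDARE

end Matrix

theorem stmt_15_general (n m : ℕ)
    (A : Matrix (Fin n) (Fin n) ℝ) (B : Matrix (Fin n) (Fin m) ℝ)
    (Q : Matrix (Fin n) (Fin n) ℝ) (S : Matrix (Fin n) (Fin m) ℝ)
    (R : Matrix (Fin m) (Fin m) ℝ)
    (hR : Rᵀ = R)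
    (hPi : (Matrix.fromBlocks Q S Sᵀ R).PosSemidef)
    (X1 X2 : Matrix (Fin n) (Fin n) ℝ) (hX1 : X1ᵀ = X1) (hX2 : X2ᵀ = X2)
    (RX1d RX2d : Matrix (Fin m) (Fin m) ℝ)
    (pen11 : (R + Bᵀ * X1 * B) * RX1d * (R + Bᵀ * X1 * B) = R + Bᵀ * X1 * B)
    (pen21 : (R + Bᵀ * X2 * B) * RX2d * (R + Bᵀ * X2 * B) = R + Bᵀ * X2 * B)
    (hGDARE1 : X1 = Aᵀ * X1 * A - (Aᵀ * X1 * B + S) * RX1d * (Aᵀ * X1 * B + S)ᵀ + Q)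
    (hGDARE2 : X2 = Aᵀ * X2 * A - (Aᵀ * X2 * B + S) * RX2d * (Aᵀ * X2 * B + S)ᵀ + Q)
    (hker1 : ∀ v : Fin m → ℝ, (R + Bᵀ * X1 * B).mulVec v = 0 → (Aᵀ * X1 * B + S).mulVec v = 0)
    (hker2 : ∀ v : Fin m → ℝ, (R + Bᵀ * X2 * B).mulVec v = 0 → (Aᵀ * X2 * B + S).mulVec v = 0) :
    ∀ v : Fin m → ℝ,
      (R + Bᵀ * X1 * B).mulVec v = 0 ↔ (R + Bᵀ * X2 * B).mulVec v = 0 := by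
  have hf : Function.Semiconj Complex.ofRealHom star star := fun x => (Complex.conj_ofReal x).symm
  have h₁ := fromBlocks_eq_popovMatrix hR hX1 pen11 hGDARE1 hker1
  have h₂ := fromBlocks_eq_popovMatrix hR hX2 pen21 hGDARE2 hker2
  have hP := hPi.map_ofReal_s15
  rw [h₁, popovMatrix_map _ hf] at hP
  have h := congrArg (Matrix.map · Complex.ofRealHom) (h₁.symm.trans h₂)
  simp only [popovMatrix_map _ hf] at h
  have hRX : ∀ X : Matrix (Fin n) (Fin n) ℝ, Xᵀ = X →
      ((R + Bᵀ * X * B).map Complex.ofRealHom).IsHermitian := fun X hX =>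
    (isHermitian_iff_isSymm.2 (isSymm_add_transpose_mul_mul hR hX B)).map _ hf
  intro v
  rw [← map_ofReal_mulVec_eq_zero_iff, ← map_ofReal_mulVec_eq_zero_iff]
  exact mulVec_eq_zero_iff_of_popovMatrix_eq hP h (hRX X1 hX1) (hRX X2 hX2) _

theorem stmt_15 (n m : ℕ)
    (A : Matrix (Fin n) (Fin n) ℝ) (B : Matrix (Fin n) (Fin m) ℝ)
    (Q : Matrix (Fin n) (Fin n) ℝ) (S : Matrix (Fin n) (Fin m) ℝ)
    (R : Matrix (Fin m) (Fin m) ℝ)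
    (hQ : Qᵀ = Q) (hR : Rᵀ = R)
    (hPi : (Matrix.fromBlocks Q S Sᵀ R).PosSemidef)
    (X1 X2 : Matrix (Fin n) (Fin n) ℝ) (hX1 : X1ᵀ = X1) (hX2 : X2ᵀ = X2)
    (RX1d RX2d : Matrix (Fin m) (Fin m) ℝ)
    (pen11 : (R + Bᵀ * X1 * B) * RX1d * (R + Bᵀ * X1 * B) = R + Bᵀ * X1 * B)
    (pen12 : RX1d * (R + Bᵀ * X1 * B) * RX1d = RX1d)
    (pen13 : ((R + Bᵀ * X1 * B) * RX1d)ᵀ = (R + Bᵀ * X1 * B) * RX1d)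
    (pen14 : (RX1d * (R + Bᵀ * X1 * B))ᵀ = RX1d * (R + Bᵀ * X1 * B))
    (pen21 : (R + Bᵀ * X2 * B) * RX2d * (R + Bᵀ * X2 * B) = R + Bᵀ * X2 * B)
    (pen22 : RX2d * (R + Bᵀ * X2 * B) * RX2d = RX2d)
    (pen23 : ((R + Bᵀ * X2 * B) * RX2d)ᵀ = (R + Bᵀ * X2 * B) * RX2d)
    (pen24 : (RX2d * (R + Bᵀ * X2 * B))ᵀ = RX2d * (R + Bᵀ * X2 * B))
    (hGDARE1 : X1 = Aᵀ * X1 * A - (Aᵀ * X1 * B + S) * RX1d * (Aᵀ * X1 * B + S)ᵀ + Q)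
    (hGDARE2 : X2 = Aᵀ * X2 * A - (Aᵀ * X2 * B + S) * RX2d * (Aᵀ * X2 * B + S)ᵀ + Q)
    (hker1 : ∀ v : Fin m → ℝ, (R + Bᵀ * X1 * B).mulVec v = 0 → (Aᵀ * X1 * B + S).mulVec v = 0)
    (hker2 : ∀ v : Fin m → ℝ, (R + Bᵀ * X2 * B).mulVec v = 0 → (Aᵀ * X2 * B + S).mulVec v = 0) :
    ∀ v : Fin m → ℝ,
      (R + Bᵀ * X1 * B).mulVec v = 0 ↔ (R + Bᵀ * X2 * B).mulVec v = 0 :=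
  stmt_15_general n m A B Q S R hR hPi X1 X2 hX1 hX2 RX1d RX2d pen11 pen21 hGDARE1 hGDARE2 hker1
    hker2
end

section
/- Assume the Popov matrix Π = [[Q, S],[Sᵀ, R]] is positive semidefinite, and let X and Y be two symmetric solutions of CGDARE(Σ). Then the reachable subspaces of the pairs (A_X, B G_X) and (A_Y, B G_Y) coincide: the subspace of ℝⁿ spanned by the columns of the matrices A_X^k B G_X for 0 ≤ k ≤ n−1 equals the subspace spanned by the columns of the matrices A_Y^k B G_Y for 0 ≤ k ≤ n−1. -/
/-!
Fix a symmetric solution `Z` of the Riccati equation and a gain `K` with `R_Z K = S_Zᵀ`; for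
`K = R_Z† S_Zᵀ` this identity is exactly the kernel condition `ker R_Z ⊆ ker S_Z`.
Completing the square in the Popov form gives, along every trajectory
`x_{t+1} = A x_t + B u_t` starting at `x_0 = 0`,
`∑_{t<N} [x_t; u_t]ᵀ Π [x_t; u_t] + x_Nᵀ Z x_N = ∑_{t<N} (K x_t + u_t)ᵀ R_Z (K x_t + u_t)`.
When `x_N = 0` the left side does not involve `Z`, so for trajectories returning to the origin
the weighted residual sum is the same for every solution.

Feeding the closed loop `A - B K` with inputs `c_t v`, where the `c_t` are the coefficients of
its characteristic polynomial, returns the state to `0` by Cayley–Hamilton; since `Π ≥ 0` this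
forces `R_Z ≥ 0`. Every generator `A_X^k B G_X w` of the reachable subspace for `X` lies on a
trajectory of the `X`-closed loop, with inputs in `ker R_X`, that afterwards returns to `0`. Its
`X`-residuals vanish, hence so does the residual sum for `Y`; as `R_Y ≥ 0`, each `Y`-residual
lies in `ker R_Y`, on which `G_Y` is the identity. So the same state sequence is a trajectory of
`(A_Y, B G_Y)`, and its points are reachable for `Y`.
-/

open Matrix Finset

namespace Matrix

theorem mul_mul_transpose_eq_transpose_of_ker_le {ι κ α : Type*} [Fintype κ] [DecidableEq κ]
    [CommRing α] {R P : Matrix κ κ α} {S : Matrix ι κ α} (hR : Rᵀ = R) (hP : R * P * R = R)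
    (hker : ∀ v, R *ᵥ v = 0 → S *ᵥ v = 0) : R * (P * Sᵀ) = Sᵀ := by
  have hRG : R * (1 - Pᵀ * R) = 0 := by
    have h : R * Pᵀ * R = (R * P * R)ᵀ := by
      rw [transpose_mul, transpose_mul, hR, Matrix.mul_assoc]
    rw [Matrix.mul_sub, Matrix.mul_one, ← Matrix.mul_assoc, h, hP, hR, sub_self]
  have hSG : S * (1 - Pᵀ * R) = 0 := by
    rw [ext_iff_mulVec]
    intro v
    rw [← mulVec_mulVec, hker _ (by rw [mulVec_mulVec, hRG, zero_mulVec]), zero_mulVec]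
  have h := congrArg transpose hSG
  rw [transpose_mul, transpose_sub, transpose_mul, transpose_one, transpose_transpose, hR,
    transpose_zero, Matrix.sub_mul, Matrix.one_mul, sub_eq_zero] at h
  rw [← Matrix.mul_assoc, ← h]

theorem dotProduct_transpose_mul_mul_mulVec_s16 {ι κ α : Type*} [Fintype ι] [Fintype κ]
    [CommRing α] (N : Matrix ι κ α) (Z : Matrix ι ι α) (v : κ → α) :
    v ⬝ᵥ (Nᵀ * Z * N) *ᵥ v = (N *ᵥ v) ⬝ᵥ Z *ᵥ (N *ᵥ v) := by
  rw [Matrix.mul_assoc, ← mulVec_mulVec, dotProduct_transpose_mulVec, mulVec_mulVec,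
    dotProduct_comm]

theorem transpose_add_transpose_mul_mul {ι κ α : Type*} [Fintype ι] [CommRing α]
    {R : Matrix κ κ α} {B : Matrix ι κ α} {Z : Matrix ι ι α} (hR : Rᵀ = R) (hZ : Zᵀ = Z) :
    (R + Bᵀ * Z * B)ᵀ = R + Bᵀ * Z * B := by
  rw [transpose_add, transpose_mul, transpose_mul, transpose_transpose, hR, hZ, Matrix.mul_assoc]

theorem sub_mul_mulVec_add_mulVec {ι κ α : Type*} [Fintype ι] [Fintype κ] [CommRing α]
    (M : Matrix ι ι α) (B : Matrix ι κ α) (K : Matrix κ ι α) (x : ι → α) (u : κ → α) :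
    (M - B * K) *ᵥ x + B *ᵥ (K *ᵥ x + u) = M *ᵥ x + B *ᵥ u := by
  rw [sub_mulVec, mulVec_add, mulVec_mulVec]
  abel

end Matrix

namespace LinearControl

section Trajectory

variable {ι κ α : Type*} [Fintype ι] [Fintype κ] [CommRing α]

def trajectory (M : Matrix ι ι α) (C : Matrix ι κ α) (u : ℕ → κ → α) : ℕ → ι → α
  | 0 => 0
  | t + 1 => M *ᵥ trajectory M C u t + C *ᵥ u t

variable {M : Matrix ι ι α} {C : Matrix ι κ α}

theorem eq_trajectory_of_succ {x : ℕ → ι → α} {u : ℕ → κ → α} (h0 : x 0 = 0)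
    (hsucc : ∀ t, x (t + 1) = M *ᵥ x t + C *ᵥ u t) : x = trajectory M C u := by
  funext t
  induction t with
  | zero => exact h0
  | succ t ih => rw [hsucc, ih, trajectory]

theorem trajectory_sub_mul_succ {B : Matrix ι κ α} {K : Matrix κ ι α} (g : ℕ → κ → α)
    (t : ℕ) :
    trajectory (M - B * K) B g (t + 1)
      = M *ᵥ trajectory (M - B * K) B g t
        + B *ᵥ (g t - K *ᵥ trajectory (M - B * K) B g t) := by
  rw [trajectory, ← sub_mul_mulVec_add_mulVec M B K, add_sub_cancel]

variable [DecidableEq ι]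

theorem trajectory_eq_sum (u : ℕ → κ → α) (N : ℕ) :
    trajectory M C u N = ∑ t ∈ range N, (M ^ (N - 1 - t) * C) *ᵥ u t := by
  induction N with
  | zero => rfl
  | succ N ih =>
    rw [trajectory, ih, sum_range_succ, mulVec_sum, Nat.add_sub_cancel, Nat.sub_self, pow_zero,
      Matrix.one_mul]
    congr 1
    refine sum_congr rfl fun t ht => ?_
    rw [mulVec_mulVec, ← Matrix.mul_assoc, ← pow_succ', show N - 1 - t + 1 = N - t by
      have := mem_range.mp ht; omega]

theorem trajectory_congr {u v : ℕ → κ → α} {N : ℕ} (h : ∀ t < N, u t = v t) :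
    trajectory M C u N = trajectory M C v N := by
  rw [trajectory_eq_sum, trajectory_eq_sum]
  exact sum_congr rfl fun t ht => by rw [h t (mem_range.mp ht)]

theorem trajectory_zero_input (N : ℕ) : trajectory M C 0 N = 0 := by
  simp [trajectory_eq_sum]

theorem trajectory_add_input (u v : ℕ → κ → α) (N : ℕ) :
    trajectory M C (u + v) N = trajectory M C u N + trajectory M C v N := by
  simp [trajectory_eq_sum, mulVec_add, sum_add_distrib]

theorem trajectory_single {s N : ℕ} (hs : s < N) (w : κ → α) :
    trajectory M C (Pi.single s w) N = (M ^ (N - 1 - s) * C) *ᵥ w := by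
  rw [trajectory_eq_sum, sum_eq_single s (fun t _ ht => by simp [ht]) (by simp [hs])]
  simp

theorem trajectory_mul_right {κ' : Type*} [Fintype κ'] (D : Matrix κ κ' α)
    (u : ℕ → κ' → α) : trajectory M (C * D) u = trajectory M C (fun t => D *ᵥ u t) := by
  funext N
  simp only [trajectory_eq_sum, Matrix.mul_assoc, mulVec_mulVec]

theorem trajectory_append (u v : ℕ → κ → α) (a b : ℕ) :
    trajectory M C (fun t => if t < a then u t else v (t - a)) (a + b)
      = M ^ b *ᵥ trajectory M C u a + trajectory M C v b := by
  induction b with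
  | zero =>
    rw [Nat.add_zero, pow_zero, one_mulVec, trajectory, add_zero]
    exact trajectory_congr fun t ht => if_pos ht
  | succ b ih =>
    rw [← Nat.add_assoc, trajectory, ih, trajectory, if_neg (by omega), Nat.add_sub_cancel_left,
      mulVec_add, mulVec_mulVec, ← pow_succ']
    abel

open Polynomial in
theorem trajectory_charpoly_coeff_eq_zero [Nontrivial α] (v : κ → α) :
    trajectory M C (fun t => M.charpoly.coeff (Fintype.card ι - t) • v)
      (Fintype.card ι + 1) = 0 := by
  have h := congrArg (fun N => (N * C) *ᵥ v) M.aeval_self_charpoly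
  simp only [aeval_eq_sum_range, charpoly_natDegree_eq_dim, Matrix.sum_mul, sum_mulVec,
    Matrix.smul_mul, smul_mulVec, Matrix.zero_mul, zero_mulVec] at h
  rw [trajectory_eq_sum, ← h, ← sum_range_reflect]
  refine sum_congr rfl fun t ht => ?_
  rw [Nat.add_sub_cancel, Nat.sub_sub_self (Nat.lt_succ_iff.mp (mem_range.mp ht)), mulVec_smul]

end Trajectory

section Reachable

variable {n : ℕ} {κ α : Type*} [Fintype κ] [CommRing α]

def reachable (M : Matrix (Fin n) (Fin n) α) (C : Matrix (Fin n) κ α) :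
    Submodule α (Fin n → α) :=
  ⨆ k : Fin n, LinearMap.range (M ^ (k : ℕ) * C).mulVecLin

variable {M : Matrix (Fin n) (Fin n) α} {C : Matrix (Fin n) κ α}

open Polynomial in
theorem pow_mul_mulVec_mem_reachable [Nontrivial α] (k : ℕ) (v : κ → α) :
    (M ^ k * C) *ᵥ v ∈ reachable M C := by
  have hdeg : ((X : α[X]) ^ k %ₘ M.charpoly).degree < n := by
    simpa [M.charpoly_degree_eq_dim] using degree_modByMonic_lt _ M.charpoly_monic
  rw [pow_eq_aeval_mod_charpoly, aeval_eq_sum_range, Matrix.sum_mul, sum_mulVec]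
  refine Submodule.sum_mem _ fun i _ => ?_
  rw [Matrix.smul_mul, smul_mulVec]
  by_cases hi : i < n
  · exact Submodule.smul_mem _ _ (Submodule.mem_iSup_of_mem (⟨i, hi⟩ : Fin n) ⟨v, rfl⟩)
  · rw [coeff_eq_zero_of_degree_lt (hdeg.trans_le (by exact_mod_cast not_lt.mp hi)), zero_smul]
    exact zero_mem _

theorem trajectory_mem_reachable [Nontrivial α] (u : ℕ → κ → α) (N : ℕ) :
    trajectory M C u N ∈ reachable M C := by
  rw [trajectory_eq_sum]
  exact Submodule.sum_mem _ fun t _ => pow_mul_mulVec_mem_reachable _ _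

theorem exists_trajectory_eq_of_mem_reachable {x : Fin n → α} (hx : x ∈ reachable M C) :
    ∃ u, trajectory M C u n = x := by
  refine Submodule.iSup_induction _ (motive := fun x => ∃ u, trajectory M C u n = x) hx ?_ ?_ ?_
  · rintro k _ ⟨w, rfl⟩
    refine ⟨Pi.single (n - 1 - k) w, ?_⟩
    rw [trajectory_single (by omega), show n - 1 - (n - 1 - k) = k by omega]
    rfl
  · exact ⟨0, trajectory_zero_input n⟩
  · rintro _ _ ⟨u, rfl⟩ ⟨v, rfl⟩
    exact ⟨u + v, trajectory_add_input u v n⟩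

theorem exists_trajectory_eq_and_eq_zero [Nontrivial α] (u : ℕ → κ → α) (a : ℕ) :
    ∃ v, trajectory M C v a = trajectory M C u a ∧ trajectory M C v (a + n) = 0 := by
  have hpad := trajectory_append (M := M) (C := C) u 0 a n
  rw [trajectory_zero_input, add_zero] at hpad
  have hmem : -(M ^ n *ᵥ trajectory M C u a) ∈ reachable M C := by
    rw [← hpad]
    exact Submodule.neg_mem _ (trajectory_mem_reachable _ _)
  obtain ⟨w, hw⟩ := exists_trajectory_eq_of_mem_reachable hmem
  refine ⟨fun t => if t < a then u t else w (t - a), ?_, ?_⟩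
  · simpa [trajectory] using trajectory_append (M := M) (C := C) u w a 0
  · rw [trajectory_append, hw, add_neg_cancel]

theorem trajectory_mem_reachable_mul [Nontrivial α] {D : Matrix κ κ α} {u : ℕ → κ → α}
    {N : ℕ} (hD : ∀ t < N, D *ᵥ u t = u t) : trajectory M C u N ∈ reachable M (C * D) := by
  rw [trajectory_congr fun t ht => (hD t ht).symm, ← trajectory_mul_right]
  exact trajectory_mem_reachable _ _

end Reachable

section Riccati

variable {ι κ α : Type*} [Fintype ι] [Fintype κ] [DecidableEq κ] [CommRing α]
  {A Q Z : Matrix ι ι α} {B S : Matrix ι κ α} {R : Matrix κ κ α} {K : Matrix κ ι α}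

theorem fromBlocks_eq_of_riccati (hZ : Zᵀ = Z) (hR : Rᵀ = R)
    (hK : (R + Bᵀ * Z * B) * K = (Aᵀ * Z * B + S)ᵀ)
    (hG : Z = Aᵀ * Z * A - (Aᵀ * Z * B + S) * K + Q) :
    fromBlocks Q S Sᵀ R + (fromCols A B)ᵀ * Z * fromCols A B
      = fromBlocks Z 0 0 0 + (fromCols K 1)ᵀ * (R + Bᵀ * Z * B) * fromCols K 1 := by
  have hKt : Kᵀ * (R + Bᵀ * Z * B) = Aᵀ * Z * B + S := by
    rw [← transpose_add_transpose_mul_mul hR hZ, ← transpose_mul, hK, transpose_transpose]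
  rw [transpose_fromCols, transpose_fromCols, fromRows_mul, fromRows_mul_fromCols, fromRows_mul,
    fromRows_mul_fromCols, fromBlocks_add, fromBlocks_add, transpose_one, Matrix.one_mul,
    Matrix.mul_one, hKt, hK, transpose_add, transpose_mul, transpose_mul, transpose_transpose, hZ]
  congr 1
  · nth_rewrite 2 [hG]
    abel
  all_goals simp only [Matrix.mul_assoc, Matrix.mul_one]; abel

theorem popov_add_eq_of_riccati (hZ : Zᵀ = Z) (hR : Rᵀ = R)
    (hK : (R + Bᵀ * Z * B) * K = (Aᵀ * Z * B + S)ᵀ)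
    (hG : Z = Aᵀ * Z * A - (Aᵀ * Z * B + S) * K + Q) (x : ι → α) (u : κ → α) :
    Sum.elim x u ⬝ᵥ fromBlocks Q S Sᵀ R *ᵥ Sum.elim x u
        + (A *ᵥ x + B *ᵥ u) ⬝ᵥ Z *ᵥ (A *ᵥ x + B *ᵥ u)
      = x ⬝ᵥ Z *ᵥ x + (K *ᵥ x + u) ⬝ᵥ (R + Bᵀ * Z * B) *ᵥ (K *ᵥ x + u) := by
  have h := congrArg (fun M => Sum.elim x u ⬝ᵥ M *ᵥ Sum.elim x u)
    (fromBlocks_eq_of_riccati hZ hR hK hG)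
  have hZ0 : Sum.elim x u ⬝ᵥ fromBlocks Z 0 0 0 *ᵥ Sum.elim x u = x ⬝ᵥ Z *ᵥ x := by
    simp [fromBlocks_mulVec]
  simpa only [add_mulVec, dotProduct_add, dotProduct_transpose_mul_mul_mulVec_s16,
    fromCols_mulVec_sumElim, one_mulVec, hZ0] using h

theorem sum_popov_add_eq_of_riccati (hZ : Zᵀ = Z) (hR : Rᵀ = R)
    (hK : (R + Bᵀ * Z * B) * K = (Aᵀ * Z * B + S)ᵀ)
    (hG : Z = Aᵀ * Z * A - (Aᵀ * Z * B + S) * K + Q) {x : ℕ → ι → α}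
    {u : ℕ → κ → α} (h0 : x 0 = 0) (hsucc : ∀ t, x (t + 1) = A *ᵥ x t + B *ᵥ u t) (N : ℕ) :
    ∑ t ∈ range N, Sum.elim (x t) (u t) ⬝ᵥ fromBlocks Q S Sᵀ R *ᵥ Sum.elim (x t) (u t)
        + x N ⬝ᵥ Z *ᵥ x N
      = ∑ t ∈ range N, (K *ᵥ x t + u t) ⬝ᵥ (R + Bᵀ * Z * B) *ᵥ (K *ᵥ x t + u t) := by
  induction N with
  | zero => simp [h0]
  | succ N ih =>
    rw [sum_range_succ, sum_range_succ, hsucc]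
    linear_combination ih + popov_add_eq_of_riccati hZ hR hK hG (x N) (u N)

end Riccati

section RealRiccati

variable {ι κ : Type*} [Fintype ι] [Fintype κ] [DecidableEq ι] [DecidableEq κ]
  {A Q X Y Z : Matrix ι ι ℝ} {B S : Matrix ι κ ℝ} {R : Matrix κ κ ℝ}
  {K KX KY : Matrix κ ι ℝ}

theorem posSemidef_of_riccati (hPi : (fromBlocks Q S Sᵀ R).PosSemidef) (hZ : Zᵀ = Z)
    (hR : Rᵀ = R) (hK : (R + Bᵀ * Z * B) * K = (Aᵀ * Z * B + S)ᵀ)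
    (hG : Z = Aᵀ * Z * A - (Aᵀ * Z * B + S) * K + Q) : (R + Bᵀ * Z * B).PosSemidef := by
  refine PosSemidef.of_dotProduct_mulVec_nonneg ?_ fun v => ?_
  · rw [IsHermitian, conjTranspose_eq_transpose_of_trivial]
    exact transpose_add_transpose_mul_mul hR hZ
  set n := Fintype.card ι
  set c : ℕ → ℝ := fun t => (A - B * K).charpoly.coeff (n - t)
  have key := sum_popov_add_eq_of_riccati hZ hR hK hG
    (x := trajectory (A - B * K) B fun t => c t • v) rfl (trajectory_sub_mul_succ _) (n + 1)
  rw [trajectory_charpoly_coeff_eq_zero, mulVec_zero, dotProduct_zero, add_zero] at key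
  simp only [add_sub_cancel, mulVec_smul, dotProduct_smul, smul_dotProduct, smul_eq_mul] at key
  set q := v ⬝ᵥ (R + Bᵀ * Z * B) *ᵥ v
  have hσ : 0 ≤ (∑ t ∈ range (n + 1), c t ^ 2) * q := by
    have hsq : (∑ t ∈ range (n + 1), c t ^ 2) * q = ∑ t ∈ range (n + 1), c t * (c t * q) := by
      rw [Finset.sum_mul]
      exact sum_congr rfl fun t _ => by ring
    rw [hsq, ← key]
    exact sum_nonneg fun t _ => by simpa using hPi.dotProduct_mulVec_nonneg _
  have hc0 : c 0 = 1 := by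
    simpa [c, n] using (charpoly_monic (A - B * K)).coeff_natDegree
  refine nonneg_of_mul_nonneg_right hσ (lt_of_lt_of_le ?_ (single_le_sum
    (fun t _ => sq_nonneg (c t)) (mem_range.mpr n.succ_pos)))
  rw [hc0, one_pow]
  exact one_pos

theorem riccati_residual_eq_zero (hPi : (fromBlocks Q S Sᵀ R).PosSemidef) (hR : Rᵀ = R)
    (hX : Xᵀ = X) (hKX : (R + Bᵀ * X * B) * KX = (Aᵀ * X * B + S)ᵀ)
    (hGX : X = Aᵀ * X * A - (Aᵀ * X * B + S) * KX + Q)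
    (hY : Yᵀ = Y) (hKY : (R + Bᵀ * Y * B) * KY = (Aᵀ * Y * B + S)ᵀ)
    (hGY : Y = Aᵀ * Y * A - (Aᵀ * Y * B + S) * KY + Q)
    {x : ℕ → ι → ℝ} {u : ℕ → κ → ℝ} (h0 : x 0 = 0)
    (hsucc : ∀ t, x (t + 1) = A *ᵥ x t + B *ᵥ u t) {N : ℕ} (hN : x N = 0)
    (hres : ∀ t < N, (R + Bᵀ * X * B) *ᵥ (KX *ᵥ x t + u t) = 0) :
    ∀ t < N, (R + Bᵀ * Y * B) *ᵥ (KY *ᵥ x t + u t) = 0 := by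
  have hsumX := sum_popov_add_eq_of_riccati hX hR hKX hGX h0 hsucc N
  have hsumY := sum_popov_add_eq_of_riccati hY hR hKY hGY h0 hsucc N
  rw [hN, mulVec_zero, dotProduct_zero, add_zero] at hsumX hsumY
  have hresX :
      ∑ t ∈ range N, (KX *ᵥ x t + u t) ⬝ᵥ (R + Bᵀ * X * B) *ᵥ (KX *ᵥ x t + u t) = 0 :=
    sum_eq_zero fun t ht => by rw [hres t (mem_range.mp ht), dotProduct_zero]
  have hpsd := posSemidef_of_riccati hPi hY hR hKY hGY
  have hzero := (sum_eq_zero_iff_of_nonneg fun t _ => by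
      simpa using hpsd.dotProduct_mulVec_nonneg (KY *ᵥ x t + u t)).mp
    (hsumY.symm.trans (hsumX.trans hresX))
  intro t ht
  simpa using (hpsd.dotProduct_mulVec_zero_iff _).mp (by simpa using hzero t (mem_range.mpr ht))

theorem reachable_le_of_riccati {n : ℕ} {A Q X Y : Matrix (Fin n) (Fin n) ℝ}
    {B S : Matrix (Fin n) κ ℝ} {R PX PY : Matrix κ κ ℝ} {KX KY : Matrix κ (Fin n) ℝ}
    (hPi : (fromBlocks Q S Sᵀ R).PosSemidef) (hR : Rᵀ = R)
    (hX : Xᵀ = X) (hKX : (R + Bᵀ * X * B) * KX = (Aᵀ * X * B + S)ᵀ)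
    (hGX : X = Aᵀ * X * A - (Aᵀ * X * B + S) * KX + Q)
    (hPX : (R + Bᵀ * X * B) * PX * (R + Bᵀ * X * B) = R + Bᵀ * X * B)
    (hY : Yᵀ = Y) (hKY : (R + Bᵀ * Y * B) * KY = (Aᵀ * Y * B + S)ᵀ)
    (hGY : Y = Aᵀ * Y * A - (Aᵀ * Y * B + S) * KY + Q) :
    reachable (A - B * KX) (B * (1 - PX * (R + Bᵀ * X * B)))
      ≤ reachable (A - B * KY) (B * (1 - PY * (R + Bᵀ * Y * B))) := by
  refine iSup_le fun k => ?_
  rintro _ ⟨w, rfl⟩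
  obtain ⟨v, hvk, hv0⟩ := exists_trajectory_eq_and_eq_zero (M := A - B * KX)
    (C := B * (1 - PX * (R + Bᵀ * X * B))) (Pi.single 0 w) (k + 1)
  rw [trajectory_single (N := k + 1) (Nat.succ_pos k), Nat.add_sub_cancel, Nat.sub_zero,
    trajectory_mul_right] at hvk
  rw [trajectory_mul_right] at hv0
  set g := fun t => (1 - PX * (R + Bᵀ * X * B)) *ᵥ v t
  set x := trajectory (A - B * KX) B g
  have hg : ∀ t, (R + Bᵀ * X * B) *ᵥ g t = 0 := fun t => by
    rw [mulVec_mulVec, Matrix.mul_sub, Matrix.mul_one, ← Matrix.mul_assoc, hPX, sub_self,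
      zero_mulVec]
  have hres := riccati_residual_eq_zero hPi hR hX hKX hGX hY hKY hGY
    (u := fun t => g t - KX *ᵥ x t) rfl (trajectory_sub_mul_succ g) hv0
    (fun t _ => by rw [add_sub_cancel]; exact hg t)
  have hxY : x = trajectory (A - B * KY) B fun t => KY *ᵥ x t + (g t - KX *ᵥ x t) :=
    eq_trajectory_of_succ rfl fun t =>
      (trajectory_sub_mul_succ g t).trans (sub_mul_mulVec_add_mulVec _ _ _ _ _).symm
  rw [mulVecLin_apply, ← hvk, hxY]
  refine trajectory_mem_reachable_mul fun t ht => ?_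
  rw [sub_mulVec, one_mulVec, ← mulVec_mulVec, hres t (by omega), mulVec_zero, sub_zero]

end RealRiccati

end LinearControl

theorem stmt_16_general (n m : ℕ)
    (A : Matrix (Fin n) (Fin n) ℝ) (B : Matrix (Fin n) (Fin m) ℝ)
    (Q : Matrix (Fin n) (Fin n) ℝ) (S : Matrix (Fin n) (Fin m) ℝ)
    (R : Matrix (Fin m) (Fin m) ℝ)
    (hR : Rᵀ = R)
    (hPi : (Matrix.fromBlocks Q S Sᵀ R).PosSemidef)
    (X Y : Matrix (Fin n) (Fin n) ℝ) (hX : Xᵀ = X) (hY : Yᵀ = Y)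
    (RXd RYd : Matrix (Fin m) (Fin m) ℝ)
    (penX1 : (R + Bᵀ * X * B) * RXd * (R + Bᵀ * X * B) = R + Bᵀ * X * B)
    (penY1 : (R + Bᵀ * Y * B) * RYd * (R + Bᵀ * Y * B) = R + Bᵀ * Y * B)
    (hGDAREX : X = Aᵀ * X * A - (Aᵀ * X * B + S) * RXd * (Aᵀ * X * B + S)ᵀ + Q)
    (hGDAREY : Y = Aᵀ * Y * A - (Aᵀ * Y * B + S) * RYd * (Aᵀ * Y * B + S)ᵀ + Q)
    (hkerX : ∀ v : Fin m → ℝ, (R + Bᵀ * X * B).mulVec v = 0 → (Aᵀ * X * B + S).mulVec v = 0)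
    (hkerY : ∀ v : Fin m → ℝ, (R + Bᵀ * Y * B).mulVec v = 0 → (Aᵀ * Y * B + S).mulVec v = 0) :
    (⨆ k : Fin n, LinearMap.range
        (Matrix.mulVecLin ((A - B * (RXd * (Aᵀ * X * B + S)ᵀ)) ^ (k : ℕ)
          * (B * (1 - RXd * (R + Bᵀ * X * B))))))
    = (⨆ k : Fin n, LinearMap.range
        (Matrix.mulVecLin ((A - B * (RYd * (Aᵀ * Y * B + S)ᵀ)) ^ (k : ℕ)
          * (B * (1 - RYd * (R + Bᵀ * Y * B)))))) := by
  have hKX := mul_mul_transpose_eq_transpose_of_ker_le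
    (transpose_add_transpose_mul_mul hR hX) penX1 hkerX
  have hKY := mul_mul_transpose_eq_transpose_of_ker_le
    (transpose_add_transpose_mul_mul hR hY) penY1 hkerY
  rw [Matrix.mul_assoc _ RXd] at hGDAREX
  rw [Matrix.mul_assoc _ RYd] at hGDAREY
  exact le_antisymm
    (LinearControl.reachable_le_of_riccati hPi hR hX hKX hGDAREX penX1 hY hKY hGDAREY)
    (LinearControl.reachable_le_of_riccati hPi hR hY hKY hGDAREY penY1 hX hKX hGDAREX)

theorem stmt_16 (n m : ℕ)
    (A : Matrix (Fin n) (Fin n) ℝ) (B : Matrix (Fin n) (Fin m) ℝ)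
    (Q : Matrix (Fin n) (Fin n) ℝ) (S : Matrix (Fin n) (Fin m) ℝ)
    (R : Matrix (Fin m) (Fin m) ℝ)
    (hQ : Qᵀ = Q) (hR : Rᵀ = R)
    (hPi : (Matrix.fromBlocks Q S Sᵀ R).PosSemidef)
    (X Y : Matrix (Fin n) (Fin n) ℝ) (hX : Xᵀ = X) (hY : Yᵀ = Y)
    (RXd RYd : Matrix (Fin m) (Fin m) ℝ)
    (penX1 : (R + Bᵀ * X * B) * RXd * (R + Bᵀ * X * B) = R + Bᵀ * X * B)
    (penX2 : RXd * (R + Bᵀ * X * B) * RXd = RXd)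
    (penX3 : ((R + Bᵀ * X * B) * RXd)ᵀ = (R + Bᵀ * X * B) * RXd)
    (penX4 : (RXd * (R + Bᵀ * X * B))ᵀ = RXd * (R + Bᵀ * X * B))
    (penY1 : (R + Bᵀ * Y * B) * RYd * (R + Bᵀ * Y * B) = R + Bᵀ * Y * B)
    (penY2 : RYd * (R + Bᵀ * Y * B) * RYd = RYd)
    (penY3 : ((R + Bᵀ * Y * B) * RYd)ᵀ = (R + Bᵀ * Y * B) * RYd)
    (penY4 : (RYd * (R + Bᵀ * Y * B))ᵀ = RYd * (R + Bᵀ * Y * B))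
    (hGDAREX : X = Aᵀ * X * A - (Aᵀ * X * B + S) * RXd * (Aᵀ * X * B + S)ᵀ + Q)
    (hGDAREY : Y = Aᵀ * Y * A - (Aᵀ * Y * B + S) * RYd * (Aᵀ * Y * B + S)ᵀ + Q)
    (hkerX : ∀ v : Fin m → ℝ, (R + Bᵀ * X * B).mulVec v = 0 → (Aᵀ * X * B + S).mulVec v = 0)
    (hkerY : ∀ v : Fin m → ℝ, (R + Bᵀ * Y * B).mulVec v = 0 → (Aᵀ * Y * B + S).mulVec v = 0) :
    (⨆ k : Fin n, LinearMap.range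
        (Matrix.mulVecLin ((A - B * (RXd * (Aᵀ * X * B + S)ᵀ)) ^ (k : ℕ)
          * (B * (1 - RXd * (R + Bᵀ * X * B))))))
    = (⨆ k : Fin n, LinearMap.range
        (Matrix.mulVecLin ((A - B * (RYd * (Aᵀ * Y * B + S)ᵀ)) ^ (k : ℕ)
          * (B * (1 - RYd * (R + Bᵀ * Y * B)))))) :=
  stmt_16_general n m A B Q S R hR hPi X Y hX hY RXd RYd penX1 penY1 hGDAREX hGDAREY hkerX hkerY
end

section
/- Let X ∈ ℝ^{n×n} be symmetric and let z ∈ ℂ be such that both zI_n − A and zI_n − A_X are invertible (all real matrices viewed as complex matrices via entrywise coercion). Then T_X(z) := I_m + K_X (zI_n − A)⁻¹ B is invertible with inverse I_m − K_X (zI_n − A_X)⁻¹ B; that is, (I_m + K_X (zI_n − A)⁻¹ B) · (I_m − K_X (zI_n − A_X)⁻¹ B) = I_m. -/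
/-!
Over ℂ, `zI - A_X = (zI - A) + B K_X`, so with `M = zI - A` the claim is the push-through
identity `(1 + K M⁻¹ B) (1 - K (M + B K)⁻¹ B) = 1`. Expanding the product leaves
`K (M⁻¹ - (M + B K)⁻¹ - M⁻¹ B K (M + B K)⁻¹) B`, which vanishes by the resolvent identity
`M⁻¹ - N⁻¹ = M⁻¹ (N - M) N⁻¹`.
-/

open Matrix

/-- Entrywise coercion of a real matrix to a complex matrix. -/
noncomputable def toC {k l : Type*} (M : Matrix k l ℝ) : Matrix k l ℂ :=
  M.map (algebraMap ℝ ℂ)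

theorem toC_sub {k l : Type*} (M N : Matrix k l ℝ) : toC (M - N) = toC M - toC N :=
  Matrix.map_sub _ (map_sub _) M N

theorem toC_mul {k l o : Type*} [Fintype l] (M : Matrix k l ℝ) (N : Matrix l o ℝ) :
    toC (M * N) = toC M * toC N :=
  Matrix.map_mul

namespace Matrix

variable {ι κ α : Type*} [Fintype ι] [DecidableEq ι] [Fintype κ] [DecidableEq κ] [CommRing α]

theorem one_add_mul_inv_mul_mul_one_sub_mul_inv_add_mul_mul_eq_one
    {M : Matrix ι ι α} {B : Matrix ι κ α} {K : Matrix κ ι α}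
    (hM : IsUnit M) (hMBK : IsUnit (M + B * K)) :
    (1 + K * M⁻¹ * B) * (1 - K * (M + B * K)⁻¹ * B) = 1 := by
  have resolvent : M⁻¹ - (M + B * K)⁻¹ = M⁻¹ * (B * K) * (M + B * K)⁻¹ := by
    rw [inv_sub_inv (iff_of_true hM hMBK), add_sub_cancel_left]
  calc (1 + K * M⁻¹ * B) * (1 - K * (M + B * K)⁻¹ * B)
      = 1 + K * (M⁻¹ - (M + B * K)⁻¹ - M⁻¹ * (B * K) * (M + B * K)⁻¹) * B := by
        simp only [Matrix.add_mul, Matrix.mul_sub, Matrix.sub_mul,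
          Matrix.mul_one, Matrix.one_mul, Matrix.mul_assoc]
        abel
    _ = 1 := by rw [resolvent, sub_self, Matrix.mul_zero, Matrix.zero_mul, add_zero]

end Matrix

theorem stmt_18_general (n m : ℕ)
    (A : Matrix (Fin n) (Fin n) ℝ) (B : Matrix (Fin n) (Fin m) ℝ)
    (S : Matrix (Fin n) (Fin m) ℝ)
    (X : Matrix (Fin n) (Fin n) ℝ)
    (RXd : Matrix (Fin m) (Fin m) ℝ)
    (z : ℂ)
    (hinv1 : IsUnit (z • (1 : Matrix (Fin n) (Fin n) ℂ) - toC A))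
    (hinv2 : IsUnit (z • (1 : Matrix (Fin n) (Fin n) ℂ)
        - toC (A - B * (RXd * (Aᵀ * X * B + S)ᵀ)))) :
    ((1 : Matrix (Fin m) (Fin m) ℂ)
        + toC (RXd * (Aᵀ * X * B + S)ᵀ)
          * (z • (1 : Matrix (Fin n) (Fin n) ℂ) - toC A)⁻¹ * toC B)
      * ((1 : Matrix (Fin m) (Fin m) ℂ)
        - toC (RXd * (Aᵀ * X * B + S)ᵀ)
          * (z • (1 : Matrix (Fin n) (Fin n) ℂ)
              - toC (A - B * (RXd * (Aᵀ * X * B + S)ᵀ)))⁻¹ * toC B)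
    = 1 := by
  have closed_loop : z • 1 - toC (A - B * (RXd * (Aᵀ * X * B + S)ᵀ))
      = (z • 1 - toC A) + toC B * toC (RXd * (Aᵀ * X * B + S)ᵀ) := by
    rw [toC_sub, toC_mul]
    abel
  rw [closed_loop] at hinv2 ⊢
  exact one_add_mul_inv_mul_mul_one_sub_mul_inv_add_mul_mul_eq_one hinv1 hinv2

theorem stmt_18 (n m : ℕ)
    (A : Matrix (Fin n) (Fin n) ℝ) (B : Matrix (Fin n) (Fin m) ℝ)
    (Q : Matrix (Fin n) (Fin n) ℝ) (S : Matrix (Fin n) (Fin m) ℝ)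
    (R : Matrix (Fin m) (Fin m) ℝ)
    (hQ : Qᵀ = Q) (hR : Rᵀ = R)
    (X : Matrix (Fin n) (Fin n) ℝ) (hX : Xᵀ = X)
    (RXd : Matrix (Fin m) (Fin m) ℝ)
    (pen1 : (R + Bᵀ * X * B) * RXd * (R + Bᵀ * X * B) = R + Bᵀ * X * B)
    (pen2 : RXd * (R + Bᵀ * X * B) * RXd = RXd)
    (pen3 : ((R + Bᵀ * X * B) * RXd)ᵀ = (R + Bᵀ * X * B) * RXd)
    (pen4 : (RXd * (R + Bᵀ * X * B))ᵀ = RXd * (R + Bᵀ * X * B))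
    (z : ℂ)
    (hinv1 : IsUnit (z • (1 : Matrix (Fin n) (Fin n) ℂ) - toC A))
    (hinv2 : IsUnit (z • (1 : Matrix (Fin n) (Fin n) ℂ)
        - toC (A - B * (RXd * (Aᵀ * X * B + S)ᵀ)))) :
    ((1 : Matrix (Fin m) (Fin m) ℂ)
        + toC (RXd * (Aᵀ * X * B + S)ᵀ)
          * (z • (1 : Matrix (Fin n) (Fin n) ℂ) - toC A)⁻¹ * toC B)
      * ((1 : Matrix (Fin m) (Fin m) ℂ)
        - toC (RXd * (Aᵀ * X * B + S)ᵀ)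
          * (z • (1 : Matrix (Fin n) (Fin n) ℂ)
              - toC (A - B * (RXd * (Aᵀ * X * B + S)ᵀ)))⁻¹ * toC B)
    = 1 :=
  stmt_18_general n m A B S X RXd z hinv1 hinv2
end
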